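/- arXiv:2401.02638 — 7 statements merged into one kernel-verified Lean document; each statement's English description precedes it below -/
import Mathlib

section
/- Let Y be a real random variable with all moments finite, (Y_j)_{j≥1} mutually independent copies of Y, S_0 = 0, S_k = Y_1 + ⋯ + Y_k. For every n ≥ 0 and every real x with x > −1/2, the series Σ_{k=0}^{∞} (x/(1+x))^k E[(S_k)_{n,λ}] converges and F^Y_{n,λ}(x) = (1/(1+x)) Σ_{k=0}^{∞} (x/(1+x))^k E[(S_k)_{n,λ}]. -/
open MeasureTheory ProbabilityTheory Finset

/-- The degenerate falling factorial `(x)_{n,lam} = prod_{j=0}^{n-1} (x - j*lam)`. -/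
noncomputable def degFallingFactorial (lam : ℝ) (n : ℕ) (x : ℝ) : ℝ :=
  ∏ j ∈ Finset.range n, (x - j * lam)

/-- The partial sums `S_k = Y_0 + ⋯ + Y_{k-1}` (so `S_0 = 0`). -/
noncomputable def partialSum {Ω : Type*} (Y : ℕ → Ω → ℝ) (k : ℕ) (ω : Ω) : ℝ :=
  ∑ j ∈ Finset.range k, Y j ω

/-- The probabilistic degenerate Stirling numbers of the second kind associated with `Y`. -/
noncomputable def probDegStirling2 {Ω : Type*} [MeasurableSpace Ω] (μ : Measure Ω)
    (Y : ℕ → Ω → ℝ) (lam : ℝ) (n k : ℕ) : ℝ :=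
  (1 / k.factorial : ℝ) *
    ∑ j ∈ Finset.range (k + 1),
      (-1 : ℝ) ^ (k - j) * k.choose j * ∫ ω, degFallingFactorial lam n (partialSum Y j ω) ∂μ

/-- The probabilistic degenerate Fubini polynomials associated with `Y`. -/
noncomputable def probDegFubini {Ω : Type*} [MeasurableSpace Ω] (μ : Measure Ω)
    (Y : ℕ → Ω → ℝ) (lam : ℝ) (n : ℕ) (x : ℝ) : ℝ :=
  ∑ k ∈ Finset.range (n + 1), probDegStirling2 μ Y lam n k * k.factorial * x ^ k

/-! ### Auxiliary lemmas on the degenerate falling factorial -/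

lemma degFF_zero (lam x : ℝ) : degFallingFactorial lam 0 x = 1 := by
  simp [degFallingFactorial]

lemma degFF_succ (lam : ℝ) (n : ℕ) (x : ℝ) :
    degFallingFactorial lam (n + 1) x = degFallingFactorial lam n x * (x - n * lam) := by
  simp [degFallingFactorial, Finset.prod_range_succ]

lemma degFF_measurable (lam : ℝ) (n : ℕ) : Measurable (degFallingFactorial lam n) := by
  unfold degFallingFactorial
  exact Finset.measurable_prod _ fun j _ => measurable_id.sub measurable_const

lemma degFF_abs_le (lam : ℝ) (n : ℕ) (x : ℝ) :
    |degFallingFactorial lam n x| ≤ (|x| + n * |lam|) ^ n := by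
  unfold degFallingFactorial
  rw [Finset.abs_prod]
  have h : ∀ j ∈ Finset.range n, |x - (j : ℝ) * lam| ≤ |x| + n * |lam| := by
    intro j hj
    have hj' : (j : ℝ) ≤ n := by exact_mod_cast (Finset.mem_range.mp hj).le
    calc |x - (j : ℝ) * lam| ≤ |x| + |(j : ℝ) * lam| := abs_sub _ _
      _ = |x| + (j : ℝ) * |lam| := by rw [abs_mul, Nat.abs_cast]
      _ ≤ |x| + n * |lam| := by
          have := mul_le_mul_of_nonneg_right hj' (abs_nonneg lam)
          linarith
  calc ∏ j ∈ Finset.range n, |x - (j : ℝ) * lam|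
      ≤ ∏ _j ∈ Finset.range n, (|x| + n * |lam|) :=
        Finset.prod_le_prod (fun j _ => abs_nonneg _) h
    _ = (|x| + n * |lam|) ^ n := by rw [Finset.prod_const, Finset.card_range]

/-- Vandermonde-type identity for the degenerate falling factorial. -/
lemma degFF_add (lam : ℝ) : ∀ (n : ℕ) (x y : ℝ),
    degFallingFactorial lam n (x + y) =
      ∑ i ∈ Finset.range (n + 1), (n.choose i : ℝ) * degFallingFactorial lam i x *
        degFallingFactorial lam (n - i) y := by
  intro n
  induction n with
  | zero => intro x y; simp [degFF_zero]
  | succ n ih =>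
    intro x y
    rw [degFF_succ, ih]
    rw [Finset.sum_mul]
    have hterm : ∀ i ∈ Finset.range (n + 1),
        (n.choose i : ℝ) * degFallingFactorial lam i x * degFallingFactorial lam (n - i) y *
            (x + y - n * lam)
          = (n.choose i : ℝ) * degFallingFactorial lam (i + 1) x *
              degFallingFactorial lam (n - i) y
            + (n.choose i : ℝ) * degFallingFactorial lam i x *
              degFallingFactorial lam (n - i + 1) y := by
      intro i hi
      have hi' : i ≤ n := Nat.lt_succ_iff.mp (Finset.mem_range.mp hi)
      have hcast : ((n - i : ℕ) : ℝ) = (n : ℝ) - i := by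
        rw [Nat.cast_sub hi']
      have hsplit : x + y - n * lam = (x - i * lam) + (y - ((n - i : ℕ) : ℝ) * lam) := by
        rw [hcast]; ring
      rw [hsplit, degFF_succ, degFF_succ]
      ring
    rw [Finset.sum_congr rfl hterm, Finset.sum_add_distrib]
    -- now: ∑ A + ∑ B = ∑_{range (n+2)} C(n+1,i) (x)_i (y)_{n+1-i}
    have hB : ∑ i ∈ Finset.range (n + 1),
        (n.choose i : ℝ) * degFallingFactorial lam i x * degFallingFactorial lam (n - i + 1) y
        = degFallingFactorial lam (n + 1) y
          + ∑ i ∈ Finset.range n, (n.choose (i + 1) : ℝ) * degFallingFactorial lam (i + 1) x *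
              degFallingFactorial lam (n - i) y := by
      rw [Finset.sum_range_succ']
      have h0 : (n.choose 0 : ℝ) * degFallingFactorial lam 0 x *
          degFallingFactorial lam (n - 0 + 1) y = degFallingFactorial lam (n + 1) y := by
        simp [degFF_zero]
      rw [h0, add_comm]
      congr 1
      refine Finset.sum_congr rfl fun i hi => ?_
      have : n - (i + 1) + 1 = n - i := by
        have := Finset.mem_range.mp hi; omega
      rw [this]
    rw [hB]
    rw [Finset.sum_range_succ' (fun i => ((n + 1).choose i : ℝ) * degFallingFactorial lam i x *
      degFallingFactorial lam (n + 1 - i) y) (n + 1)]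
    have h0' : (((n + 1).choose 0 : ℕ) : ℝ) * degFallingFactorial lam 0 x *
        degFallingFactorial lam (n + 1 - 0) y = degFallingFactorial lam (n + 1) y := by
      simp [degFF_zero]
    rw [h0']
    have hA : ∑ i ∈ Finset.range (n + 1),
        (((n + 1).choose (i + 1) : ℕ) : ℝ) * degFallingFactorial lam (i + 1) x *
          degFallingFactorial lam (n + 1 - (i + 1)) y
        = ∑ i ∈ Finset.range (n + 1),
            ((n.choose i : ℝ) + (n.choose (i + 1) : ℝ)) * degFallingFactorial lam (i + 1) x *
              degFallingFactorial lam (n - i) y := by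
      refine Finset.sum_congr rfl fun i hi => ?_
      have h1 : n + 1 - (i + 1) = n - i := by omega
      rw [h1, Nat.choose_succ_succ, Nat.cast_add]
    rw [hA]
    have hA2 : ∑ i ∈ Finset.range (n + 1),
        ((n.choose i : ℝ) + (n.choose (i + 1) : ℝ)) * degFallingFactorial lam (i + 1) x *
          degFallingFactorial lam (n - i) y
        = (∑ i ∈ Finset.range (n + 1), (n.choose i : ℝ) * degFallingFactorial lam (i + 1) x *
            degFallingFactorial lam (n - i) y)
          + ∑ i ∈ Finset.range (n + 1), (n.choose (i + 1) : ℝ) *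
              degFallingFactorial lam (i + 1) x * degFallingFactorial lam (n - i) y := by
      rw [← Finset.sum_add_distrib]
      refine Finset.sum_congr rfl fun i _ => by ring
    rw [hA2]
    have hA3 : ∑ i ∈ Finset.range (n + 1), (n.choose (i + 1) : ℝ) *
        degFallingFactorial lam (i + 1) x * degFallingFactorial lam (n - i) y
        = ∑ i ∈ Finset.range n, (n.choose (i + 1) : ℝ) *
            degFallingFactorial lam (i + 1) x * degFallingFactorial lam (n - i) y := by
      rw [Finset.sum_range_succ, Nat.choose_succ_self]
      simp
    rw [hA3]
    ring
section Prob

variable {Ω : Type*} [MeasurableSpace Ω] {μ : Measure Ω} [IsProbabilityMeasure μ]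
  {Y : ℕ → Ω → ℝ}

lemma partialSum_measurable (hmeas : ∀ j, Measurable (Y j)) (k : ℕ) :
    Measurable (partialSum Y k) := by
  unfold partialSum
  exact Finset.measurable_sum _ fun j _ => hmeas j

lemma partialSum_fun_eq (k : ℕ) : partialSum Y k = ∑ j ∈ Finset.range k, Y j := by
  funext ω; simp [partialSum]

lemma indepFun_partialSum (hmeas : ∀ j, Measurable (Y j))
    (hindep : iIndepFun Y μ) (k : ℕ) :
    IndepFun (partialSum Y k) (Y k) μ := by
  rw [partialSum_fun_eq]
  exact hindep.indepFun_sum_range_succ hmeas k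

lemma integrable_absSum_pow (hmeas : ∀ j, Measurable (Y j))
    (hindep : iIndepFun Y μ)
    (hident : ∀ j, IdentDistrib (Y j) (Y 0) μ μ)
    (hmom : ∀ m : ℕ, Integrable (fun ω => |Y 0 ω| ^ m) μ) (k : ℕ) :
    ∀ m : ℕ, Integrable (fun ω => (∑ j ∈ Finset.range k, |Y j ω|) ^ m) μ := by
  induction k with
  | zero =>
    intro m
    simpa using integrable_const ((0 : ℝ) ^ m)
  | succ k ih =>
    intro m
    have h1 : (fun ω => (∑ j ∈ Finset.range (k + 1), |Y j ω|) ^ m)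
        = fun ω => ∑ i ∈ Finset.range (m + 1),
            (∑ j ∈ Finset.range k, |Y j ω|) ^ i * |Y k ω| ^ (m - i) * (m.choose i : ℝ) := by
      funext ω
      rw [Finset.sum_range_succ, add_pow]
    rw [h1]
    refine integrable_finset_sum _ fun i _ => ?_
    have habs : iIndepFun (fun j => (fun v : ℝ => |v|) ∘ Y j) μ :=
      hindep.comp _ fun _ => measurable_abs
    have h0 : IndepFun (∑ j ∈ Finset.range k, (fun v : ℝ => |v|) ∘ Y j)
        ((fun v : ℝ => |v|) ∘ Y k) μ :=
      habs.indepFun_sum_range_succ (fun j => measurable_abs.comp (hmeas j)) k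
    have h2 : IndepFun ((fun v : ℝ => v ^ i) ∘ (∑ j ∈ Finset.range k, (fun v : ℝ => |v|) ∘ Y j))
        ((fun v : ℝ => v ^ (m - i)) ∘ ((fun v : ℝ => |v|) ∘ Y k)) μ :=
      h0.comp (measurable_id.pow_const i) (measurable_id.pow_const (m - i))
    have heq1 : ((fun v : ℝ => v ^ i) ∘ (∑ j ∈ Finset.range k, (fun v : ℝ => |v|) ∘ Y j))
        = fun ω => (∑ j ∈ Finset.range k, |Y j ω|) ^ i := by
      funext ω; simp [Function.comp]
    have heq2 : ((fun v : ℝ => v ^ (m - i)) ∘ ((fun v : ℝ => |v|) ∘ Y k))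
        = fun ω => |Y k ω| ^ (m - i) := by
      funext ω; simp [Function.comp]
    rw [heq1, heq2] at h2
    have hYk : Integrable (fun ω => |Y k ω| ^ (m - i)) μ := by
      have hid : IdentDistrib (fun ω => |Y k ω| ^ (m - i)) (fun ω => |Y 0 ω| ^ (m - i)) μ μ :=
        (hident k).comp (measurable_abs.pow_const (m - i))
      exact hid.integrable_iff.mpr (hmom (m - i))
    exact (h2.integrable_mul (ih i) hYk).mul_const _

lemma integrable_degFF_partialSum (lam : ℝ) (hmeas : ∀ j, Measurable (Y j))
    (hindep : iIndepFun Y μ)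
    (hident : ∀ j, IdentDistrib (Y j) (Y 0) μ μ)
    (hmom : ∀ m : ℕ, Integrable (fun ω => |Y 0 ω| ^ m) μ) (n k : ℕ) :
    Integrable (fun ω => degFallingFactorial lam n (partialSum Y k ω)) μ := by
  have hmajor : Integrable (fun ω => (∑ j ∈ Finset.range k, |Y j ω| + n * |lam|) ^ n) μ := by
    have h1 : (fun ω => (∑ j ∈ Finset.range k, |Y j ω| + n * |lam|) ^ n)
        = fun ω => ∑ i ∈ Finset.range (n + 1),
            (∑ j ∈ Finset.range k, |Y j ω|) ^ i * ((n : ℝ) * |lam|) ^ (n - i) *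
              (n.choose i : ℝ) := by
      funext ω; rw [add_pow]
    rw [h1]
    exact integrable_finset_sum _ fun i _ =>
      ((integrable_absSum_pow hmeas hindep hident hmom k i).mul_const _).mul_const _
  refine hmajor.mono ?_ (Filter.Eventually.of_forall fun ω => ?_)
  · exact ((degFF_measurable lam n).comp (partialSum_measurable hmeas k)).aestronglyMeasurable
  · have hT : |partialSum Y k ω| ≤ ∑ j ∈ Finset.range k, |Y j ω| := by
      unfold partialSum
      exact Finset.abs_sum_le_sum_abs _ _
    have hb := degFF_abs_le lam n (partialSum Y k ω)
    have hnn : (0 : ℝ) ≤ ∑ j ∈ Finset.range k, |Y j ω| + n * |lam| := by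
      have : (0 : ℝ) ≤ ∑ j ∈ Finset.range k, |Y j ω| :=
        Finset.sum_nonneg fun j _ => abs_nonneg _
      positivity
    calc ‖degFallingFactorial lam n (partialSum Y k ω)‖
        = |degFallingFactorial lam n (partialSum Y k ω)| := rfl
      _ ≤ (|partialSum Y k ω| + n * |lam|) ^ n := hb
      _ ≤ (∑ j ∈ Finset.range k, |Y j ω| + n * |lam|) ^ n := by
          apply pow_le_pow_left₀ (by positivity) (by linarith)
      _ ≤ ‖(∑ j ∈ Finset.range k, |Y j ω| + n * |lam|) ^ n‖ := le_abs_self _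

lemma integrable_degFF_Y (lam : ℝ) (hmeas : ∀ j, Measurable (Y j))
    (hindep : iIndepFun Y μ)
    (hident : ∀ j, IdentDistrib (Y j) (Y 0) μ μ)
    (hmom : ∀ m : ℕ, Integrable (fun ω => |Y 0 ω| ^ m) μ) (n j : ℕ) :
    Integrable (fun ω => degFallingFactorial lam n (Y j ω)) μ := by
  have h0 : Integrable (fun ω => degFallingFactorial lam n (Y 0 ω)) μ := by
    have := integrable_degFF_partialSum lam hmeas hindep hident hmom n 1
    simpa [partialSum] using this
  exact ((hident j).comp (degFF_measurable lam n)).integrable_iff.mpr h0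

lemma a_rec (lam : ℝ) (hmeas : ∀ j, Measurable (Y j))
    (hindep : iIndepFun Y μ)
    (hident : ∀ j, IdentDistrib (Y j) (Y 0) μ μ)
    (hmom : ∀ m : ℕ, Integrable (fun ω => |Y 0 ω| ^ m) μ) (n k : ℕ) :
    ∫ ω, degFallingFactorial lam n (partialSum Y (k + 1) ω) ∂μ
      = ∑ i ∈ Finset.range (n + 1), (n.choose i : ℝ) *
          (∫ ω, degFallingFactorial lam i (partialSum Y k ω) ∂μ) *
          (∫ ω, degFallingFactorial lam (n - i) (Y 0 ω) ∂μ) := by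
  have hps : ∀ ω, partialSum Y (k + 1) ω = partialSum Y k ω + Y k ω := by
    intro ω; simp [partialSum, Finset.sum_range_succ]
  have hindepik : ∀ i j : ℕ, IndepFun (fun ω => degFallingFactorial lam i (partialSum Y k ω))
      (fun ω => degFallingFactorial lam j (Y k ω)) μ := by
    intro i j
    have := (indepFun_partialSum hmeas hindep k).comp
      (degFF_measurable lam i) (degFF_measurable lam j)
    exact this
  have hintP : ∀ i j : ℕ, Integrable (fun ω => degFallingFactorial lam i (partialSum Y k ω) *
      degFallingFactorial lam j (Y k ω)) μ := by
    intro i j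
    exact (hindepik i j).integrable_mul
      (integrable_degFF_partialSum lam hmeas hindep hident hmom i k)
      (integrable_degFF_Y lam hmeas hindep hident hmom j k)
  have h1 : ∫ ω, degFallingFactorial lam n (partialSum Y (k + 1) ω) ∂μ
      = ∫ ω, ∑ i ∈ Finset.range (n + 1), (n.choose i : ℝ) *
          (degFallingFactorial lam i (partialSum Y k ω) *
            degFallingFactorial lam (n - i) (Y k ω)) ∂μ := by
    congr 1
    funext ω
    rw [hps ω, degFF_add]
    exact Finset.sum_congr rfl fun i _ => by ring
  rw [h1, integral_finset_sum _ fun i _ => ((hintP i (n - i)).const_mul _)]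
  refine Finset.sum_congr rfl fun i _ => ?_
  rw [integral_const_mul]
  have hmul : ∫ ω, degFallingFactorial lam i (partialSum Y k ω) *
      degFallingFactorial lam (n - i) (Y k ω) ∂μ
      = (∫ ω, degFallingFactorial lam i (partialSum Y k ω) ∂μ) *
        (∫ ω, degFallingFactorial lam (n - i) (Y k ω) ∂μ) :=
    (hindepik i (n - i)).integral_mul_eq_mul_integral
      (integrable_degFF_partialSum lam hmeas hindep hident hmom i k).aestronglyMeasurable
      (integrable_degFF_Y lam hmeas hindep hident hmom (n - i) k).aestronglyMeasurable
  have hid := ((hident k).comp (degFF_measurable lam (n - i))).integral_eq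
  simp only [Function.comp_def] at hid
  rw [hmul, hid]
  ring

end Prob
/-! ### Binomial-coefficient representations of sequences -/

/-- `f : ℕ → ℝ` is a linear combination of the binomial coefficients `k ↦ C(k, m)`, `m ≤ n`. -/
def BinRep (n : ℕ) (f : ℕ → ℝ) : Prop :=
  ∃ d : ℕ → ℝ, ∀ k, f k = ∑ m ∈ Finset.range (n + 1), d m * (k.choose m : ℝ)

lemma BinRep.congr {n : ℕ} {f g : ℕ → ℝ} (h : ∀ k, f k = g k) (hf : BinRep n f) :
    BinRep n g := by
  obtain ⟨d, hd⟩ := hf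
  exact ⟨d, fun k => (h k) ▸ hd k⟩

lemma BinRep.mono {n n' : ℕ} (h : n ≤ n') {f : ℕ → ℝ} (hf : BinRep n f) : BinRep n' f := by
  obtain ⟨d, hd⟩ := hf
  refine ⟨fun m => if m ≤ n then d m else 0, fun k => ?_⟩
  dsimp only
  rw [hd k]
  symm
  rw [← Finset.sum_subset (Finset.range_subset_range.mpr (by omega) :
    Finset.range (n + 1) ⊆ Finset.range (n' + 1))]
  · refine Finset.sum_congr rfl fun m hm => ?_
    have hm2 := Finset.mem_range.mp hm
    rw [if_pos (by omega : m ≤ n)]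
  · intro m hm hm'
    have hm2 : ¬ m < n + 1 := fun h => hm' (Finset.mem_range.mpr h)
    rw [if_neg (by omega : ¬ m ≤ n), zero_mul]

lemma BinRep.const_mul {n : ℕ} {f : ℕ → ℝ} (c : ℝ) (hf : BinRep n f) :
    BinRep n (fun k => c * f k) := by
  obtain ⟨d, hd⟩ := hf
  refine ⟨fun m => c * d m, fun k => ?_⟩
  dsimp only
  rw [hd k, Finset.mul_sum]
  exact Finset.sum_congr rfl fun m _ => by ring

lemma BinRep.add {n : ℕ} {f g : ℕ → ℝ} (hf : BinRep n f) (hg : BinRep n g) :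
    BinRep n (fun k => f k + g k) := by
  obtain ⟨d, hd⟩ := hf
  obtain ⟨e, he⟩ := hg
  refine ⟨fun m => d m + e m, fun k => ?_⟩
  dsimp only
  rw [hd k, he k, ← Finset.sum_add_distrib]
  exact Finset.sum_congr rfl fun m _ => by ring

lemma BinRep.finsetSum {ι : Type*} {n : ℕ} (s : Finset ι) (f : ι → ℕ → ℝ)
    (h : ∀ i ∈ s, BinRep n (f i)) : BinRep n (fun k => ∑ i ∈ s, f i k) := by
  classical
  induction s using Finset.induction_on with
  | empty => exact ⟨fun _ => 0, fun k => by simp⟩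
  | insert a s hx ih =>
    have h1 : BinRep n (f a) := h a (Finset.mem_insert_self a s)
    have h2 : BinRep n (fun k => ∑ i ∈ s, f i k) :=
      ih fun i hi => h i (Finset.mem_insert_of_mem hi)
    exact (h1.add h2).congr fun k => by rw [Finset.sum_insert hx]

lemma sum_range_choose_hockey (k m : ℕ) :
    ∑ j ∈ Finset.range k, j.choose m = k.choose (m + 1) := by
  induction k with
  | zero => simp
  | succ k ih =>
    rw [Finset.sum_range_succ, ih, Nat.choose_succ_succ k m, Nat.succ_eq_add_one]
    omega

lemma BinRep.antideriv {n : ℕ} {g f : ℕ → ℝ} {C0 : ℝ} (hg : BinRep n g)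
    (hf : ∀ k, f k = C0 + ∑ j ∈ Finset.range k, g j) : BinRep (n + 1) f := by
  obtain ⟨d, hd⟩ := hg
  refine ⟨fun m => if m = 0 then C0 else d (m - 1), fun k => ?_⟩
  dsimp only
  rw [hf k]
  have hsum : ∑ j ∈ Finset.range k, g j
      = ∑ m ∈ Finset.range (n + 1), d m * (k.choose (m + 1) : ℝ) := by
    calc ∑ j ∈ Finset.range k, g j
        = ∑ j ∈ Finset.range k, ∑ m ∈ Finset.range (n + 1), d m * (j.choose m : ℝ) :=
          Finset.sum_congr rfl fun j _ => hd j
      _ = ∑ m ∈ Finset.range (n + 1), ∑ j ∈ Finset.range k, d m * (j.choose m : ℝ) :=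
          Finset.sum_comm
      _ = ∑ m ∈ Finset.range (n + 1), d m * (k.choose (m + 1) : ℝ) := by
          refine Finset.sum_congr rfl fun m _ => ?_
          rw [← Finset.mul_sum]
          congr 1
          rw [← Nat.cast_sum]
          exact_mod_cast congrArg (Nat.cast (R := ℝ)) (sum_range_choose_hockey k m)
  rw [hsum, Finset.sum_range_succ' (fun m => (if m = 0 then C0 else d (m - 1)) *
    (k.choose m : ℝ)) (n + 1)]
  simp only [if_pos rfl, Nat.choose_zero_right, Nat.cast_one, mul_one, Nat.add_sub_cancel]
  rw [add_comm]
  simp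

/-! ### An orthogonality identity for binomial coefficients -/

lemma alt_sum_choose_choose (m l : ℕ) :
    ∑ j ∈ Finset.range (m + 1), (-1 : ℝ) ^ (m - j) * (m.choose j : ℝ) * (j.choose l : ℝ)
      = if l = m then 1 else 0 := by
  by_cases hlm : l ≤ m
  · have hsub : Finset.Ico l (m + 1) ⊆ Finset.range (m + 1) := by
      rw [Finset.range_eq_Ico]
      exact Finset.Ico_subset_Ico (Nat.zero_le _) le_rfl
    have hzero : ∀ j ∈ Finset.range (m + 1), j ∉ Finset.Ico l (m + 1) →
        (-1 : ℝ) ^ (m - j) * (m.choose j : ℝ) * (j.choose l : ℝ) = 0 := by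
      intro j hj hj'
      have hj1 := Finset.mem_range.mp hj
      have hj2 : j < l := by
        simp only [Finset.mem_Ico] at hj'
        omega
      rw [Nat.choose_eq_zero_of_lt hj2]
      simp
    rw [← Finset.sum_subset hsub hzero, Finset.sum_Ico_eq_sum_range]
    have hM : m + 1 - l = (m - l) + 1 := by omega
    rw [hM]
    have hterm : ∀ t ∈ Finset.range ((m - l) + 1),
        (-1 : ℝ) ^ (m - (l + t)) * (m.choose (l + t) : ℝ) * ((l + t).choose l : ℝ)
          = (m.choose l : ℝ) * ((-1 : ℝ) ^ (m - l) * ((-1 : ℝ) ^ t * ((m - l).choose t : ℝ))) := by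
      intro t ht
      have htle : t ≤ m - l := Nat.lt_succ_iff.mp (Finset.mem_range.mp ht)
      have h1 : m.choose (l + t) * (l + t).choose l = m.choose l * (m - l).choose t := by
        have := Nat.choose_mul (n := m) (k := l + t) (s := l) (by omega)
        simpa using this
      have h1' : (m.choose (l + t) : ℝ) * ((l + t).choose l : ℝ)
          = (m.choose l : ℝ) * ((m - l).choose t : ℝ) := by exact_mod_cast h1
      have h3 : m - l = (m - (l + t)) + t := by omega
      have h2 : (-1 : ℝ) ^ (m - (l + t)) = (-1 : ℝ) ^ (m - l) * (-1 : ℝ) ^ t := by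
        rw [h3, pow_add, mul_assoc, ← mul_pow]
        norm_num
      calc (-1 : ℝ) ^ (m - (l + t)) * (m.choose (l + t) : ℝ) * ((l + t).choose l : ℝ)
          = (-1 : ℝ) ^ (m - (l + t)) * ((m.choose (l + t) : ℝ) * ((l + t).choose l : ℝ)) := by
            ring
        _ = (-1 : ℝ) ^ (m - (l + t)) * ((m.choose l : ℝ) * ((m - l).choose t : ℝ)) := by
            rw [h1']
        _ = (m.choose l : ℝ) * ((-1 : ℝ) ^ (m - l) * ((-1 : ℝ) ^ t * ((m - l).choose t : ℝ))) := by
            rw [h2]; ring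
    rw [Finset.sum_congr rfl hterm, ← Finset.mul_sum, ← Finset.mul_sum]
    have halt : ∑ t ∈ Finset.range ((m - l) + 1), (-1 : ℝ) ^ t * ((m - l).choose t : ℝ)
        = if m - l = 0 then 1 else 0 := by
      have h := Int.alternating_sum_range_choose (n := m - l)
      have h2 := congrArg (fun z : ℤ => (z : ℝ)) h
      push_cast at h2
      convert h2 using 2
    rw [halt]
    by_cases hl : l = m
    · subst hl
      simp
    · have hne : m - l ≠ 0 := by omega
      rw [if_neg hne, if_neg hl]
      ring
  · rw [if_neg (by omega : ¬ l = m)]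
    refine Finset.sum_eq_zero fun j hj => ?_
    have hjl : j < l := by
      have := Finset.mem_range.mp hj
      omega
    rw [Nat.choose_eq_zero_of_lt hjl]
    simp
section Main

variable {Ω : Type*} [MeasurableSpace Ω] {μ : Measure Ω} [IsProbabilityMeasure μ]
  {Y : ℕ → Ω → ℝ}

lemma binRep_integral_degFF (lam : ℝ) (hmeas : ∀ j, Measurable (Y j))
    (hindep : iIndepFun Y μ)
    (hident : ∀ j, IdentDistrib (Y j) (Y 0) μ μ)
    (hmom : ∀ m : ℕ, Integrable (fun ω => |Y 0 ω| ^ m) μ) (n : ℕ) :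
    BinRep n (fun k => ∫ ω, degFallingFactorial lam n (partialSum Y k ω) ∂μ) := by
  induction n using Nat.strong_induction_on with
  | _ n ih =>
    cases n with
    | zero =>
      refine ⟨fun _ => 1, fun k => ?_⟩
      simp [degFF_zero]
    | succ N =>
      have hc0 : (∫ ω, degFallingFactorial lam 0 (Y 0 ω) ∂μ) = 1 := by
        simp [degFF_zero]
      have hrec : ∀ k, (∫ ω, degFallingFactorial lam (N + 1) (partialSum Y (k + 1) ω) ∂μ)
          - (∫ ω, degFallingFactorial lam (N + 1) (partialSum Y k ω) ∂μ)
          = ∑ i ∈ Finset.range (N + 1), (((N + 1).choose i : ℝ) *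
              (∫ ω, degFallingFactorial lam ((N + 1) - i) (Y 0 ω) ∂μ)) *
              (∫ ω, degFallingFactorial lam i (partialSum Y k ω) ∂μ) := by
        intro k
        rw [a_rec lam hmeas hindep hident hmom (N + 1) k, Finset.sum_range_succ,
          Nat.sub_self, Nat.choose_self, hc0]
        push_cast
        rw [one_mul, mul_one, add_sub_cancel_right]
        exact Finset.sum_congr rfl fun i _ => by ring
      have hg : BinRep N (fun k =>
          (∫ ω, degFallingFactorial lam (N + 1) (partialSum Y (k + 1) ω) ∂μ)
          - (∫ ω, degFallingFactorial lam (N + 1) (partialSum Y k ω) ∂μ)) := by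
        refine BinRep.congr (fun k => (hrec k).symm) ?_
        refine BinRep.finsetSum _ _ fun i hi => ?_
        have hi' : i < N + 1 := Finset.mem_range.mp hi
        exact ((ih i (by omega)).mono (by omega : i ≤ N)).const_mul _
      refine hg.antideriv
        (C0 := ∫ ω, degFallingFactorial lam (N + 1) (partialSum Y 0 ω) ∂μ) fun k => ?_
      rw [Finset.sum_range_sub
        (f := fun j => ∫ ω, degFallingFactorial lam (N + 1) (partialSum Y j ω) ∂μ)]
      ring

end Main

theorem probDegFubini_eq_tsum
    {Ω : Type*} [MeasurableSpace Ω] (μ : Measure Ω) [IsProbabilityMeasure μ]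
    (Y : ℕ → Ω → ℝ) (lam : ℝ)
    (hmeas : ∀ j, Measurable (Y j))
    (hindep : iIndepFun Y μ)
    (hident : ∀ j, IdentDistrib (Y j) (Y 0) μ μ)
    (hmom : ∀ m : ℕ, Integrable (fun ω => |Y 0 ω| ^ m) μ)
    (n : ℕ) (x : ℝ) (hx : x > -(1/2 : ℝ)) :
    HasSum
      (fun k : ℕ => (x / (1 + x)) ^ k * ∫ ω, degFallingFactorial lam n (partialSum Y k ω) ∂μ)
      ((1 + x) * probDegFubini μ Y lam n x) := by
  obtain ⟨d, hd⟩ := binRep_integral_degFF lam hmeas hindep hident hmom n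
  have hd' : ∀ k : ℕ, (∫ ω, degFallingFactorial lam n (partialSum Y k ω) ∂μ)
      = ∑ m ∈ Finset.range (n + 1), d m * (k.choose m : ℝ) := hd
  have hstir : ∀ m ∈ Finset.range (n + 1),
      probDegStirling2 μ Y lam n m * (m.factorial : ℝ) = d m := by
    intro m hm
    have hS : ∑ j ∈ Finset.range (m + 1), (-1 : ℝ) ^ (m - j) * (m.choose j : ℝ) *
        ∫ ω, degFallingFactorial lam n (partialSum Y j ω) ∂μ = d m := by
      calc ∑ j ∈ Finset.range (m + 1), (-1 : ℝ) ^ (m - j) * (m.choose j : ℝ) *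
            ∫ ω, degFallingFactorial lam n (partialSum Y j ω) ∂μ
          = ∑ j ∈ Finset.range (m + 1), ∑ l ∈ Finset.range (n + 1),
              d l * ((-1 : ℝ) ^ (m - j) * (m.choose j : ℝ) * (j.choose l : ℝ)) := by
            refine Finset.sum_congr rfl fun j _ => ?_
            rw [hd' j, Finset.mul_sum]
            exact Finset.sum_congr rfl fun l _ => by ring
        _ = ∑ l ∈ Finset.range (n + 1),
              d l * ∑ j ∈ Finset.range (m + 1),
                (-1 : ℝ) ^ (m - j) * (m.choose j : ℝ) * (j.choose l : ℝ) := by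
            rw [Finset.sum_comm]
            exact Finset.sum_congr rfl fun l _ => by rw [Finset.mul_sum]
        _ = ∑ l ∈ Finset.range (n + 1), d l * (if l = m then 1 else 0) := by
            refine Finset.sum_congr rfl fun l _ => ?_
            rw [alt_sum_choose_choose m l]
        _ = d m := by
            simp only [mul_ite, mul_one, mul_zero]
            rw [Finset.sum_ite_eq' (Finset.range (n + 1)) m d, if_pos hm]
    unfold probDegStirling2
    rw [mul_comm (1 / (m.factorial : ℝ)), mul_assoc, hS]
    have hfac : (m.factorial : ℝ) ≠ 0 := Nat.cast_ne_zero.mpr m.factorial_ne_zero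
    field_simp
  have hfub : probDegFubini μ Y lam n x = ∑ m ∈ Finset.range (n + 1), d m * x ^ m := by
    unfold probDegFubini
    exact Finset.sum_congr rfl fun m hm => by rw [← hstir m hm]
  have hx1 : (0 : ℝ) < 1 + x := by linarith
  set t : ℝ := x / (1 + x) with ht_def
  have habs : |t| < 1 := by
    rw [ht_def, abs_div, abs_of_pos hx1, div_lt_one hx1, abs_lt]
    constructor <;> linarith
  have hchoose : ∀ m : ℕ, HasSum (fun k : ℕ => (k.choose m : ℝ) * t ^ k) (x ^ m * (1 + x)) := by
    intro m
    have h0 := hasSum_choose_mul_geometric_of_norm_lt_one (𝕜 := ℝ) m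
      (by rwa [Real.norm_eq_abs])
    have h1 := h0.mul_left (t ^ m)
    have h2 : (fun k : ℕ => t ^ m * (((k + m).choose m : ℝ) * t ^ k))
        = fun k : ℕ => (((k + m).choose m : ℝ)) * t ^ (k + m) := by
      funext k; rw [pow_add]; ring
    rw [h2] at h1
    have hz : ∑ i ∈ Finset.range m, (i.choose m : ℝ) * t ^ i = 0 :=
      Finset.sum_eq_zero fun i hi => by
        rw [Nat.choose_eq_zero_of_lt (Finset.mem_range.mp hi)]; simp
    have h3 : HasSum (fun k : ℕ => (k.choose m : ℝ) * t ^ k)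
        (t ^ m * (1 / (1 - t) ^ (m + 1))) := by
      refine (hasSum_nat_add_iff' m).mp ?_
      rw [hz, sub_zero]
      exact h1
    have h1t : 1 - t = 1 / (1 + x) := by
      rw [ht_def]; field_simp; ring
    have hval : t ^ m * (1 / (1 - t) ^ (m + 1)) = x ^ m * (1 + x) := by
      have h9 : ((1 : ℝ) / (1 + x)) ^ (m + 1) = 1 / (1 + x) ^ (m + 1) := by
        rw [div_pow, one_pow]
      rw [h1t, h9, one_div_one_div, ht_def, div_pow, pow_succ]
      field_simp
    rw [hval] at h3
    exact h3
  have hsum := hasSum_sum (f := fun m (k : ℕ) => d m * ((k.choose m : ℝ) * t ^ k))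
      (a := fun m => d m * (x ^ m * (1 + x))) (s := Finset.range (n + 1))
      (fun m _ => (hchoose m).mul_left (d m))
  have hfun : (fun k : ℕ => ∑ m ∈ Finset.range (n + 1), d m * ((k.choose m : ℝ) * t ^ k))
      = fun k : ℕ => t ^ k * ∫ ω, degFallingFactorial lam n (partialSum Y k ω) ∂μ := by
    funext k
    rw [hd' k, Finset.mul_sum]
    exact Finset.sum_congr rfl fun m _ => by ring
  have hvalue : ∑ m ∈ Finset.range (n + 1), d m * (x ^ m * (1 + x))
      = (1 + x) * probDegFubini μ Y lam n x := by
    rw [hfub, Finset.mul_sum]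
    exact Finset.sum_congr rfl fun m _ => by ring
  rw [hfun, hvalue] at hsum
  exact hsum
end

section
/- Let Y be an exponential random variable with rate 1 (i.e., Y ∼ Γ(1,1), density e^{−y} on (0,∞)), and let (Y_j)_{j≥1} be mutually independent copies of Y with S_0 = 0, S_k = Y_1 + ⋯ + Y_k. Then for every n ≥ 0 and every real x, F^Y_{n,λ}(x) = Σ_{l=0}^{n} Σ_{k=0}^{l} k! · λ^{n−l} · L(l,k) · S_1(n,l) · x^k, where L(l,k) are the Lah numbers and S_1(n,l) are the (signed) Stirling numbers of the first kind. -/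
open MeasureTheory ProbabilityTheory Finset

/-- The Lah numbers: `L(l,k) = (l!/k!) * C(l-1,k-1)` for `l ≥ k ≥ 1`,
`L(0,0) = 1`, and `L(l,0) = 0` for `l ≥ 1`. -/
noncomputable def lahNumber (l k : ℕ) : ℝ :=
  if l = 0 ∧ k = 0 then 1
  else if k = 0 then 0
  else (l.factorial : ℝ) / k.factorial * (l - 1).choose (k - 1)

/-- The signed Stirling numbers of the first kind, defined by
`x(x-1)⋯(x-n+1) = ∑_{l=0}^n S₁(n,l) x^l`. -/
noncomputable def stirling1 (n l : ℕ) : ℝ :=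
  (∏ j ∈ Finset.range n, (Polynomial.X - Polynomial.C (j : ℝ))).coeff l

section AuxCombinatorics

/-- Alternating sum of binomial coefficients with sign `(-1)^(n-i)`. -/
lemma probDF_alt_sum_real (n : ℕ) :
    ∑ i ∈ range (n + 1), (-1 : ℝ) ^ (n - i) * n.choose i = if n = 0 then 1 else 0 := by
  have h := Int.alternating_sum_range_choose (n := n)
  have h2 : ∑ i ∈ range (n + 1), (-1 : ℝ) ^ i * n.choose i = if n = 0 then 1 else 0 := by
    have := congrArg (fun z : ℤ => (z : ℝ)) h
    push_cast at this
    rw [this]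
  have : ∀ i ∈ range (n + 1), (-1 : ℝ) ^ (n - i) * n.choose i
      = (-1 : ℝ) ^ n * ((-1 : ℝ) ^ i * n.choose i) := by
    intro i hi
    have hin : i ≤ n := Nat.lt_succ_iff.mp (mem_range.mp hi)
    have : (-1 : ℝ) ^ (n - i) * (-1 : ℝ) ^ i = (-1 : ℝ) ^ n := by
      rw [← pow_add, Nat.sub_add_cancel hin]
    have h4 : ((-1:ℝ) ^ i) * ((-1:ℝ) ^ i) = 1 := by
      rw [← pow_add]
      rcases Nat.even_or_odd (i + i) with h5 | h5
      · exact h5.neg_one_pow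
      · exact absurd h5 (by simp [Nat.even_add])
    linear_combination ((-1:ℝ) ^ i * (n.choose i : ℝ)) * this
      - ((-1:ℝ) ^ (n - i) * (n.choose i : ℝ)) * h4
  rw [sum_congr rfl this, ← mul_sum, h2]
  split
  · next hn => subst hn; simp
  · simp

lemma probDF_alt_sum_desc (k m : ℕ) :
    ∑ j ∈ range (k + 1), (-1 : ℝ) ^ (k - j) * k.choose j * j.descFactorial m
      = if m = k then (k.factorial : ℝ) else 0 := by
  rcases le_or_gt m k with hmk | hmk
  · have hsplit : range (k + 1) = Finset.Ico 0 (k + 1) := by rw [Finset.range_eq_Ico]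
    rw [hsplit, ← Finset.sum_Ico_consecutive _ (Nat.zero_le m) (by omega : m ≤ k + 1)]
    have h1 : ∑ j ∈ Finset.Ico 0 m, (-1 : ℝ) ^ (k - j) * k.choose j * j.descFactorial m = 0 := by
      apply Finset.sum_eq_zero
      intro j hj
      have : j < m := (Finset.mem_Ico.mp hj).2
      rw [Nat.descFactorial_eq_zero_iff_lt.mpr this]
      simp
    rw [h1, zero_add, Finset.sum_Ico_eq_sum_range]
    have hkey : ∀ i ∈ range (k + 1 - m),
        (-1 : ℝ) ^ (k - (m + i)) * k.choose (m + i) * (m + i).descFactorial m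
          = ((k.descFactorial m : ℝ)) * ((-1 : ℝ) ^ ((k - m) - i) * (k - m).choose i) := by
      intro i hi
      have him : m + i ≤ k := by have := mem_range.mp hi; omega
      have hc : (k.choose (m + i) * (m + i).choose m : ℕ) = k.choose m * (k - m).choose i := by
        have := Nat.choose_mul (n := k) (k := m + i) (s := m) (Nat.le_add_right _ _)
        simpa using this
      have hd : ((m + i).descFactorial m : ℕ) = m.factorial * (m + i).choose m :=
        Nat.descFactorial_eq_factorial_mul_choose _ _
      have hd2 : (k.descFactorial m : ℕ) = m.factorial * k.choose m :=
        Nat.descFactorial_eq_factorial_mul_choose _ _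
      have hsub : k - (m + i) = (k - m) - i := by omega
      rw [hsub]
      push_cast [hd, hd2]
      have : (k.choose (m + i) : ℝ) * ((m + i).choose m : ℝ)
          = (k.choose m : ℝ) * ((k - m).choose i : ℝ) := by
        exact_mod_cast congrArg (Nat.cast : ℕ → ℝ) hc
      linear_combination ((-1:ℝ) ^ (k - m - i) * (m.factorial : ℝ)) * this
    rw [sum_congr rfl hkey, ← mul_sum]
    have : k + 1 - m = (k - m) + 1 := by omega
    rw [this, probDF_alt_sum_real (k - m)]
    rcases eq_or_ne m k with h | h
    · subst h; simp [Nat.descFactorial_self]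
    · have : k - m ≠ 0 := by omega
      simp [this, h]
  · have : ∀ j ∈ range (k + 1), (-1 : ℝ) ^ (k - j) * k.choose j * j.descFactorial m = 0 := by
      intro j hj
      have : j < m := by have := mem_range.mp hj; omega
      rw [Nat.descFactorial_eq_zero_iff_lt.mpr this]
      simp
    rw [sum_eq_zero this, if_neg (by omega)]

lemma probDF_choose_vandermonde_aux (j l' : ℕ) :
    (j + l').choose (l' + 1) = ∑ m ∈ range (l' + 1), j.choose (m + 1) * l'.choose m := by
  rw [Nat.add_choose_eq, Finset.Nat.sum_antidiagonal_eq_sum_range_succ_mk,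
    Finset.sum_range_succ' _ (l' + 1)]
  simp only [Nat.choose_zero_right, Nat.choose_succ_self, Nat.mul_zero, Nat.add_zero,
    Nat.zero_mul, Nat.one_mul, Nat.sub_zero]
  apply Finset.sum_congr rfl
  intro m hm
  have hm' : m ≤ l' := Nat.lt_succ_iff.mp (mem_range.mp hm)
  have h2 : l' + 1 - (m + 1) = l' - m := by omega
  rw [h2, Nat.choose_symm hm']

lemma probDF_lah_expand (j l : ℕ) :
    (j.ascFactorial l : ℝ) = ∑ m ∈ range (l + 1), lahNumber l m * j.descFactorial m := by
  cases l with
  | zero => simp [lahNumber]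
  | succ l' =>
    rw [Finset.sum_range_succ']
    have h0 : lahNumber (l' + 1) 0 * (j.descFactorial 0 : ℝ) = 0 := by simp [lahNumber]
    rw [h0, add_zero]
    have hterm : ∀ m ∈ range (l' + 1),
        lahNumber (l' + 1) (m + 1) * (j.descFactorial (m + 1) : ℝ)
          = ((l' + 1).factorial : ℝ) * (l'.choose m) * (j.choose (m + 1)) := by
      intro m hm
      rw [lahNumber, if_neg (by omega), if_neg (by omega),
        Nat.descFactorial_eq_factorial_mul_choose]
      simp only [Nat.add_sub_cancel]
      push_cast
      have hne : ((m + 1).factorial : ℝ) ≠ 0 := by positivity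
      field_simp
    rw [Finset.sum_congr rfl hterm, Nat.ascFactorial_eq_factorial_mul_choose']
    have h1 : j + (l' + 1) - 1 = j + l' := by omega
    rw [h1, probDF_choose_vandermonde_aux]
    push_cast [Finset.mul_sum]
    exact Finset.sum_congr rfl fun m hm => by ring

lemma probDF_natIdent1 (j l : ℕ) :
    ∑ m ∈ range (l + 1), l.choose m * j.ascFactorial m * (l - m).factorial
      = (j + 1).ascFactorial l := by
  cases j with
  | zero =>
    rw [Finset.sum_eq_single 0]
    · simp [Nat.one_ascFactorial]
    · intro m hm hm0
      obtain ⟨m', rfl⟩ := Nat.exists_eq_succ_of_ne_zero hm0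
      rw [Nat.zero_ascFactorial]
      simp
    · simp
  | succ j' =>
    have hterm : ∀ m ∈ range (l + 1),
        l.choose m * (j' + 1).ascFactorial m * (l - m).factorial
          = l.factorial * (j' + m).choose m := by
      intro m hm
      have hml : m ≤ l := Nat.lt_succ_iff.mp (mem_range.mp hm)
      rw [Nat.ascFactorial_eq_factorial_mul_choose]
      calc l.choose m * (m.factorial * (j' + m).choose m) * (l - m).factorial
          = l.choose m * m.factorial * (l - m).factorial * (j' + m).choose m := by ring
        _ = l.factorial * (j' + m).choose m := by
            rw [Nat.choose_mul_factorial_mul_factorial hml]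
    rw [Finset.sum_congr rfl hterm, ← Finset.mul_sum]
    have hsum : ∑ m ∈ range (l + 1), (j' + m).choose m = (l + j' + 1).choose (j' + 1) := by
      rw [← Nat.sum_range_add_choose l j']
      exact Finset.sum_congr rfl fun m hm => by
        rw [Nat.add_comm j' m, ← Nat.choose_symm (Nat.le_add_right m j'), Nat.add_sub_cancel_left]
    rw [hsum, Nat.ascFactorial_eq_factorial_mul_choose]
    congr 1
    rw [← Nat.choose_symm (Nat.le_add_left l (j' + 1)), Nat.add_sub_cancel]
    congr 1
    omega

end AuxCombinatorics

section AuxStirling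

lemma probDF_stirling1_zero (l : ℕ) : stirling1 0 l = if l = 0 then 1 else 0 := by
  simp [stirling1, Polynomial.coeff_one]

lemma probDF_stirling1_of_lt {n l : ℕ} (h : n < l) : stirling1 n l = 0 := by
  unfold stirling1
  apply Polynomial.coeff_eq_zero_of_natDegree_lt
  calc (∏ j ∈ Finset.range n, (Polynomial.X - Polynomial.C (j : ℝ))).natDegree
      ≤ ∑ j ∈ Finset.range n, (Polynomial.X - Polynomial.C (j : ℝ)).natDegree :=
        Polynomial.natDegree_prod_le _ _
    _ = ∑ _j ∈ Finset.range n, 1 :=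
        Finset.sum_congr rfl fun j _ => Polynomial.natDegree_X_sub_C _
    _ = n := by simp
    _ < l := h

lemma probDF_stirling1_succ_succ (n l : ℕ) :
    stirling1 (n + 1) (l + 1) = stirling1 n l - stirling1 n (l + 1) * n := by
  unfold stirling1
  rw [Finset.prod_range_succ, Polynomial.coeff_mul_X_sub_C]

lemma probDF_stirling1_succ_zero (n : ℕ) :
    stirling1 (n + 1) 0 = stirling1 n 0 * (-(n : ℝ)) := by
  unfold stirling1
  rw [Finset.prod_range_succ, Polynomial.mul_coeff_zero]
  simp

lemma degFallingFactorial_expand (lam : ℝ) (n : ℕ) (y : ℝ) :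
    degFallingFactorial lam n y
      = ∑ l ∈ range (n + 1), stirling1 n l * lam ^ (n - l) * y ^ l := by
  induction n with
  | zero => simp [degFallingFactorial, probDF_stirling1_zero]
  | succ n ih =>
    rw [degFallingFactorial, Finset.prod_range_succ, ← degFallingFactorial, ih]
    rw [Finset.sum_range_succ' (fun l => stirling1 (n + 1) l * lam ^ (n + 1 - l) * y ^ l) (n + 1)]
    have hexp : ∀ l, l ∈ range (n + 1) → (n + 1 - (l + 1)) = n - l := fun l hl => by omega
    have key : ∀ l ∈ range (n + 1),
        stirling1 (n + 1) (l + 1) * lam ^ (n + 1 - (l + 1)) * y ^ (l + 1)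
          = stirling1 n l * lam ^ (n - l) * y ^ (l + 1)
            - stirling1 n (l + 1) * (n : ℝ) * lam ^ (n - l) * y ^ (l + 1) := by
      intro l hl
      rw [probDF_stirling1_succ_succ, hexp l hl]
      ring
    rw [Finset.sum_congr rfl key, Finset.sum_sub_distrib, probDF_stirling1_succ_zero]
    have hsum1 : ∑ l ∈ range (n + 1), stirling1 n l * lam ^ (n - l) * y ^ (l + 1)
        = (∑ l ∈ range (n + 1), stirling1 n l * lam ^ (n - l) * y ^ l) * y := by
      rw [Finset.sum_mul]; exact Finset.sum_congr rfl fun l hl => by ring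
    have hsum2 : ∑ l ∈ range (n + 1), stirling1 n (l + 1) * (n : ℝ) * lam ^ (n - l) * y ^ (l + 1)
        = (∑ l ∈ range (n + 1), stirling1 n l * lam ^ (n - l) * y ^ l) * ((n : ℝ) * lam)
          - stirling1 n 0 * lam ^ n * ((n : ℝ) * lam) := by
      rw [Finset.sum_mul,
        Finset.sum_range_succ' (fun l => stirling1 n l * lam ^ (n - l) * y ^ l * ((n:ℝ) * lam)) n]
      rw [Nat.sub_zero, pow_zero, mul_one]
      rw [add_sub_cancel_right]
      rw [Finset.sum_range_succ]
      rw [probDF_stirling1_of_lt (Nat.lt_succ_self n)]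
      simp only [zero_mul, mul_zero, add_zero]
      exact Finset.sum_congr rfl fun l hl => by
        have hln : l < n := mem_range.mp hl
        have : n - l = (n - (l + 1)) + 1 := by omega
        rw [this, pow_succ]
        ring
    rw [hsum1, hsum2]
    simp only [Nat.sub_zero]
    ring

end AuxStirling

section AuxAnalytic

open Set Real
open scoped NNReal ENNReal

lemma probDF_exp_measure_moment (m : ℕ) :
    Integrable (fun x : ℝ => x ^ m) (volume.withDensity (exponentialPDF 1)) ∧
      ∫ x, x ^ m ∂(volume.withDensity (exponentialPDF 1)) = m.factorial := by
  set f : ℝ → ℝ≥0 := fun x => (exponentialPDFReal 1 x).toNNReal with hf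
  have f_meas : Measurable f := (measurable_exponentialPDFReal 1).real_toNNReal
  have hν : volume.withDensity (exponentialPDF 1)
      = volume.withDensity (fun x => (f x : ℝ≥0∞)) := by
    congr 1
  have hfun : (fun x : ℝ => f x • x ^ m)
      = Set.indicator (Set.Ici (0:ℝ)) (fun x => Real.exp (-x) * x ^ m) := by
    funext x
    rw [hf]
    simp only [NNReal.smul_def, Real.coe_toNNReal', Set.indicator_apply, Set.mem_Ici]
    rw [exponentialPDFReal, gammaPDFReal]
    rcases le_or_gt 0 x with hx | hx
    · have h1 : (1:ℝ) ^ (1:ℝ) / Real.Gamma 1 * x ^ ((1:ℝ) - 1) * rexp (-(1 * x))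
          = rexp (-x) := by
        rw [Real.Gamma_one]
        norm_num
      rw [if_pos hx, if_pos hx, h1, max_eq_left (Real.exp_nonneg _), smul_eq_mul]
    · rw [if_neg (not_le.mpr hx), if_neg (not_le.mpr hx)]
      simp
  have hIoi : IntegrableOn (fun x => Real.exp (-x) * x ^ m) (Set.Ioi (0:ℝ)) volume := by
    have h := Real.GammaIntegral_convergent (s := (m : ℝ) + 1) (by positivity)
    apply h.congr_fun ?_ measurableSet_Ioi
    intro x hx
    simp [Real.rpow_natCast]
  have hIci : IntegrableOn (fun x => Real.exp (-x) * x ^ m) (Set.Ici (0:ℝ)) volume :=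
    (Iff.mpr integrableOn_Ici_iff_integrableOn_Ioi) hIoi
  have hint : Integrable (fun x : ℝ => f x • x ^ m) volume := by
    rw [hfun]
    exact (integrable_indicator_iff measurableSet_Ici).mpr hIci
  constructor
  · rw [hν]
    exact (integrable_withDensity_iff_integrable_smul f_meas).mpr hint
  · rw [hν, integral_withDensity_eq_integral_smul f_meas, hfun,
      integral_indicator measurableSet_Ici, integral_Ici_eq_integral_Ioi]
    have : ∫ x in Set.Ioi (0:ℝ), Real.exp (-x) * x ^ m
        = ∫ x in Set.Ioi (0:ℝ), Real.exp (-x) * x ^ (((m : ℝ) + 1) - 1) := by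
      apply setIntegral_congr_fun measurableSet_Ioi
      intro x hx
      simp [Real.rpow_natCast]
    rw [this, ← Real.Gamma_eq_integral (by positivity)]
    exact_mod_cast Real.Gamma_nat_eq_factorial m

end AuxAnalytic

theorem probDegFubini_of_exponential
    {Ω : Type*} [MeasurableSpace Ω] (μ : Measure Ω) [IsProbabilityMeasure μ]
    (Y : ℕ → Ω → ℝ) (lam : ℝ)
    (hmeas : ∀ j, Measurable (Y j))
    (hindep : iIndepFun Y μ)
    (hident : ∀ j, IdentDistrib (Y j) (Y 0) μ μ)
    (hexp : Measure.map (Y 0) μ = volume.withDensity (exponentialPDF 1))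
    (n : ℕ) (x : ℝ) :
    probDegFubini μ Y lam n x =
      ∑ l ∈ Finset.range (n + 1), ∑ k ∈ Finset.range (l + 1),
        (k.factorial : ℝ) * lam ^ (n - l) * lahNumber l k * stirling1 n l * x ^ k := by
  classical
  -- moments of each Y j
  have hYmom : ∀ j m, Integrable (fun ω => (Y j ω) ^ m) μ ∧
      ∫ ω, (Y j ω) ^ m ∂μ = (m.factorial : ℝ) := by
    intro j m
    have hmap : Measure.map (Y j) μ = volume.withDensity (exponentialPDF 1) :=
      (hident j).map_eq.trans hexp
    have hgm : AEStronglyMeasurable (fun x : ℝ => x ^ m) (Measure.map (Y j) μ) :=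
      (measurable_id.pow_const m).aestronglyMeasurable
    constructor
    · have h1 := (probDF_exp_measure_moment m).1
      rw [← hmap] at h1
      exact (integrable_map_measure hgm (hmeas j).aemeasurable).mp h1
    · have h2 := (probDF_exp_measure_moment m).2
      rw [← hmap, integral_map (hmeas j).aemeasurable hgm] at h2
      exact h2
  -- moments of the partial sums
  have hSmom : ∀ j l, Integrable (fun ω => (partialSum Y j ω) ^ l) μ ∧
      ∫ ω, (partialSum Y j ω) ^ l ∂μ = ((j.ascFactorial l : ℕ) : ℝ) := by
    intro j
    induction j with
    | zero =>
      intro l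
      have h0 : partialSum Y 0 = fun _ => (0:ℝ) := funext fun ω => by simp [partialSum]
      rw [h0]
      cases l with
      | zero => simp
      | succ l' => simp [Nat.zero_ascFactorial]
    | succ j ih =>
      intro l
      have hS1 : ∀ ω, partialSum Y (j+1) ω = partialSum Y j ω + Y j ω :=
        fun ω => Finset.sum_range_succ _ _
      have hfunS : partialSum Y j = ∑ i ∈ Finset.range j, Y i :=
        funext fun ω => (Finset.sum_apply ω (Finset.range j) Y).symm
      have hindS : IndepFun (partialSum Y j) (Y j) μ := by
        rw [hfunS]
        exact hindep.indepFun_finsetSum_of_notMem hmeas Finset.notMem_range_self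
      have hTI : ∀ m, IndepFun (fun ω => partialSum Y j ω ^ m)
          (fun ω => Y j ω ^ (l - m)) μ :=
        fun m => hindS.comp (measurable_id.pow_const m) (measurable_id.pow_const (l - m))
      have hTint : ∀ m, Integrable (fun ω => partialSum Y j ω ^ m * Y j ω ^ (l - m)) μ :=
        fun m => (hTI m).integrable_mul (ih m).1 (hYmom j (l - m)).1
      have hexp2 : (fun ω => partialSum Y (j+1) ω ^ l) = fun ω =>
          ∑ m ∈ Finset.range (l+1),
            partialSum Y j ω ^ m * Y j ω ^ (l - m) * (l.choose m : ℝ) := by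
        funext ω
        rw [hS1 ω, add_pow]
      constructor
      · rw [hexp2]
        exact integrable_finset_sum _ (fun m _ => (hTint m).mul_const _)
      · rw [hexp2, integral_finset_sum _ (fun m _ => (hTint m).mul_const _)]
        have hterm : ∀ m ∈ range (l+1),
            ∫ ω, partialSum Y j ω ^ m * Y j ω ^ (l - m) * (l.choose m : ℝ) ∂μ
              = ((l.choose m * j.ascFactorial m * (l - m).factorial : ℕ) : ℝ) := by
          intro m _
          rw [integral_mul_const]
          have hmul : ∫ ω, partialSum Y j ω ^ m * Y j ω ^ (l - m) ∂μ
              = (∫ ω, partialSum Y j ω ^ m ∂μ) * ∫ ω, Y j ω ^ (l - m) ∂μ :=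
            (hTI m).integral_mul_eq_mul_integral (ih m).1.aestronglyMeasurable
              (hYmom j (l - m)).1.aestronglyMeasurable
          rw [hmul, (ih m).2, (hYmom j (l - m)).2]
          push_cast
          ring
        rw [Finset.sum_congr rfl hterm, ← Nat.cast_sum, probDF_natIdent1 j l]
  -- integral of the degenerate falling factorial of the partial sums
  have hE : ∀ j, ∫ ω, degFallingFactorial lam n (partialSum Y j ω) ∂μ
      = ∑ l ∈ range (n+1), stirling1 n l * lam ^ (n - l) * ((j.ascFactorial l : ℕ) : ℝ) := by
    intro j
    have h1 : (fun ω => degFallingFactorial lam n (partialSum Y j ω))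
        = fun ω => ∑ l ∈ range (n+1), stirling1 n l * lam ^ (n - l) * partialSum Y j ω ^ l :=
      funext fun ω => degFallingFactorial_expand lam n _
    rw [h1, integral_finset_sum _ (fun l _ => ((hSmom j l).1.const_mul _))]
    exact Finset.sum_congr rfl fun l _ => by rw [integral_const_mul, (hSmom j l).2]
  -- the inner combinatorial sum
  have hinner : ∀ l k : ℕ,
      ∑ j ∈ range (k+1), (-1:ℝ)^(k-j) * k.choose j * ((j.ascFactorial l : ℕ) : ℝ)
        = if k ∈ range (l+1) then lahNumber l k * k.factorial else 0 := by
    intro l k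
    have h1 : ∀ j ∈ range (k+1), (-1:ℝ)^(k-j) * k.choose j * ((j.ascFactorial l : ℕ) : ℝ)
        = ∑ m ∈ range (l+1),
            lahNumber l m * ((-1:ℝ)^(k-j) * k.choose j * j.descFactorial m) := by
      intro j _
      rw [probDF_lah_expand j l, Finset.mul_sum]
      exact Finset.sum_congr rfl fun m _ => by ring
    rw [Finset.sum_congr rfl h1, Finset.sum_comm]
    have h2 : ∀ m ∈ range (l+1),
        ∑ j ∈ range (k+1), lahNumber l m * ((-1:ℝ)^(k-j) * k.choose j * j.descFactorial m)
          = if m = k then lahNumber l m * k.factorial else 0 := by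
      intro m _
      rw [← Finset.mul_sum, probDF_alt_sum_desc k m]
      split <;> simp
    rw [Finset.sum_congr rfl h2,
      Finset.sum_ite_eq' (range (l+1)) k (fun m => lahNumber l m * k.factorial)]
  -- compute the probabilistic degenerate Stirling numbers
  have hstir : ∀ k, probDegStirling2 μ Y lam n k
      = (1/(k.factorial:ℝ)) * ∑ l ∈ range (n+1), stirling1 n l * lam^(n-l) *
          (if k ∈ range (l+1) then lahNumber l k * k.factorial else 0) := by
    intro k
    unfold probDegStirling2
    congr 1
    calc ∑ j ∈ range (k+1), (-1:ℝ)^(k-j) * k.choose j *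
            ∫ ω, degFallingFactorial lam n (partialSum Y j ω) ∂μ
        = ∑ j ∈ range (k+1), ∑ l ∈ range (n+1), stirling1 n l * lam^(n-l) *
            ((-1:ℝ)^(k-j) * k.choose j * ((j.ascFactorial l : ℕ) : ℝ)) := by
          refine Finset.sum_congr rfl fun j _ => ?_
          rw [hE j, Finset.mul_sum]
          exact Finset.sum_congr rfl fun l _ => by ring
      _ = ∑ l ∈ range (n+1), ∑ j ∈ range (k+1), stirling1 n l * lam^(n-l) *
            ((-1:ℝ)^(k-j) * k.choose j * ((j.ascFactorial l : ℕ) : ℝ)) := Finset.sum_comm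
      _ = ∑ l ∈ range (n+1), stirling1 n l * lam^(n-l) *
            (if k ∈ range (l+1) then lahNumber l k * k.factorial else 0) := by
          refine Finset.sum_congr rfl fun l _ => ?_
          rw [← Finset.mul_sum, hinner l k]
  -- final assembly
  unfold probDegFubini
  calc ∑ k ∈ range (n + 1), probDegStirling2 μ Y lam n k * k.factorial * x ^ k
      = ∑ k ∈ range (n + 1), ∑ l ∈ range (n + 1),
          (if k ∈ range (l+1) then
            (k.factorial : ℝ) * lam ^ (n - l) * lahNumber l k * stirling1 n l * x ^ k
          else 0) := by
        refine Finset.sum_congr rfl fun k _ => ?_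
        rw [hstir k]
        have hk0 : (k.factorial : ℝ) ≠ 0 := by positivity
        have hc : (1/(k.factorial:ℝ)) * (∑ l ∈ range (n+1), stirling1 n l * lam^(n-l) *
            (if k ∈ range (l+1) then lahNumber l k * k.factorial else 0)) * k.factorial * x ^ k
            = (∑ l ∈ range (n+1), stirling1 n l * lam^(n-l) *
              (if k ∈ range (l+1) then lahNumber l k * k.factorial else 0)) * x ^ k := by
          field_simp
        rw [hc, Finset.sum_mul]
        refine Finset.sum_congr rfl fun l _ => ?_
        split_ifs with h
        · ring
        · simp
    _ = ∑ l ∈ range (n + 1), ∑ k ∈ range (n + 1),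
          (if k ∈ range (l+1) then
            (k.factorial : ℝ) * lam ^ (n - l) * lahNumber l k * stirling1 n l * x ^ k
          else 0) := Finset.sum_comm
    _ = ∑ l ∈ Finset.range (n + 1), ∑ k ∈ Finset.range (l + 1),
          (k.factorial : ℝ) * lam ^ (n - l) * lahNumber l k * stirling1 n l * x ^ k := by
        refine Finset.sum_congr rfl fun l hl => ?_
        rw [Finset.sum_ite_mem]
        congr 1
        have hln : l ≤ n := Nat.lt_succ_iff.mp (mem_range.mp hl)
        ext a
        simp only [Finset.mem_inter, Finset.mem_range]
        omega
end

section
/- Let Y be a real random variable with all moments finite, (Y_j)_{j≥1} mutually independent copies of Y, S_0 = 0, S_k = Y_1 + ⋯ + Y_k. For every n ≥ 0 and every real x, ∫_0^∞ φ^Y_{n,λ}(x·y) e^{−y} dy = F^Y_{n,λ}(x). -/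
open MeasureTheory ProbabilityTheory Finset

/-- The probabilistic degenerate Bell polynomials associated with `Y`. -/
noncomputable def probDegBell {Ω : Type*} [MeasurableSpace Ω] (μ : Measure Ω)
    (Y : ℕ → Ω → ℝ) (lam : ℝ) (n : ℕ) (x : ℝ) : ℝ :=
  ∑ k ∈ Finset.range (n + 1), probDegStirling2 μ Y lam n k * x ^ k


open MeasureTheory in
private lemma pow_mul_exp_integrable (k : ℕ) :
    IntegrableOn (fun y : ℝ => y ^ k * Real.exp (-y)) (Set.Ioi 0) := by
  have h := Real.GammaIntegral_convergent (s := (k + 1 : ℝ)) (by positivity)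
  refine h.congr_fun (fun y hy => ?_) measurableSet_Ioi
  rw [add_sub_cancel_right]
  beta_reduce
  rw [Real.rpow_natCast, mul_comm]

open MeasureTheory in
private lemma pow_mul_exp_integral (k : ℕ) :
    ∫ y in Set.Ioi (0:ℝ), y ^ k * Real.exp (-y) = k.factorial := by
  have h := Real.integral_rpow_mul_exp_neg_mul_Ioi (a := (k+1:ℝ)) (r := 1) (by positivity) one_pos
  simp only [add_sub_cancel_right, one_mul, one_div, inv_one, Real.one_rpow] at h
  rw [Real.Gamma_nat_eq_factorial] at h
  rw [← h]
  refine setIntegral_congr_fun measurableSet_Ioi (fun y hy => ?_)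
  rw [Real.rpow_natCast]

theorem integral_probDegBell_eq_probDegFubini
    {Ω : Type*} [MeasurableSpace Ω] (μ : Measure Ω) [IsProbabilityMeasure μ]
    (Y : ℕ → Ω → ℝ) (lam : ℝ)
    (hmeas : ∀ j, Measurable (Y j))
    (hindep : iIndepFun Y μ)
    (hident : ∀ j, IdentDistrib (Y j) (Y 0) μ μ)
    (hmom : ∀ m : ℕ, Integrable (fun ω => |Y 0 ω| ^ m) μ)
    (n : ℕ) (x : ℝ) :
    ∫ y in Set.Ioi (0 : ℝ), probDegBell μ Y lam n (x * y) * Real.exp (-y) =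
      probDegFubini μ Y lam n x := by

  have hpt : ∀ y : ℝ, probDegBell μ Y lam n (x * y) * Real.exp (-y)
      = ∑ k ∈ Finset.range (n + 1),
          (probDegStirling2 μ Y lam n k * x ^ k) * (y ^ k * Real.exp (-y)) := by
    intro y
    rw [probDegBell, Finset.sum_mul]
    refine Finset.sum_congr rfl fun k _ => ?_
    rw [mul_pow]; ring
  simp only [hpt]
  rw [MeasureTheory.integral_finset_sum _ (fun k _ =>
    ((pow_mul_exp_integrable k).const_mul _))]
  rw [probDegFubini]
  refine Finset.sum_congr rfl fun k _ => ?_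
  rw [MeasureTheory.integral_const_mul, pow_mul_exp_integral]
  ring
end

section
/- Let Y be a real random variable with all moments finite, (Y_j)_{j≥1} mutually independent copies of Y, S_0 = 0, S_k = Y_1 + ⋯ + Y_k. For every n ≥ 1 and every real x, F^Y_{n,λ}(x) = x · Σ_{k=1}^{n} C(n,k) · E[(Y)_{k,λ}] · F^Y_{n−k,λ}(x). -/
open MeasureTheory ProbabilityTheory Finset

namespace ProbDegAux

lemma degFF_zero (lam : ℝ) (x : ℝ) : degFallingFactorial lam 0 x = 1 := by
  simp [degFallingFactorial]

lemma degFF_succ (lam : ℝ) (n : ℕ) (x : ℝ) :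
    degFallingFactorial lam (n+1) x = degFallingFactorial lam n x * (x - n * lam) := by
  simp [degFallingFactorial, Finset.prod_range_succ]

lemma degFF_add (lam : ℝ) (n : ℕ) (x y : ℝ) :
    degFallingFactorial lam n (x + y) =
      ∑ m ∈ Finset.range (n+1), (n.choose m : ℝ) * degFallingFactorial lam m x *
        degFallingFactorial lam (n-m) y := by
  induction n with
  | zero => simp [degFallingFactorial]
  | succ n ih =>
    rw [degFF_succ, ih, Finset.sum_mul]
    have key : ∀ m ∈ Finset.range (n+1),
        (n.choose m : ℝ) * degFallingFactorial lam m x * degFallingFactorial lam (n-m) y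
          * (x + y - n*lam)
        = (n.choose m : ℝ) * degFallingFactorial lam (m+1) x * degFallingFactorial lam (n-m) y
            + (n.choose m : ℝ) * degFallingFactorial lam m x
              * degFallingFactorial lam ((n-m)+1) y := by
      intro m hm
      have hm' : m ≤ n := Nat.lt_succ_iff.mp (Finset.mem_range.mp hm)
      have hc : ((n - m : ℕ) : ℝ) = (n : ℝ) - m := by
        rw [Nat.cast_sub hm']
      have hsplit : x + y - (n:ℝ)*lam = (x - m*lam) + (y - ((n-m : ℕ):ℝ)*lam) := by
        rw [hc]; ring
      rw [hsplit, degFF_succ, degFF_succ]; ring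
    rw [Finset.sum_congr rfl key, Finset.sum_add_distrib]
    have h2 : ∀ m ∈ Finset.range (n+1),
        (n.choose m : ℝ) * degFallingFactorial lam m x * degFallingFactorial lam ((n-m)+1) y
        = (n.choose m : ℝ) * degFallingFactorial lam m x
            * degFallingFactorial lam ((n+1)-m) y := by
      intro m hm
      have hm' : m ≤ n := Nat.lt_succ_iff.mp (Finset.mem_range.mp hm)
      rw [Nat.succ_sub hm']
    rw [Finset.sum_congr rfl h2]
    have h3 : ∑ m ∈ Finset.range (n+2),
          (n.choose m : ℝ) * degFallingFactorial lam m x * degFallingFactorial lam ((n+1)-m) y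
        = ∑ m ∈ Finset.range (n+1),
          (n.choose m : ℝ) * degFallingFactorial lam m x * degFallingFactorial lam ((n+1)-m) y := by
      rw [Finset.sum_range_succ, Nat.choose_succ_self]
      simp
    rw [← h3, Finset.sum_range_succ'
      (fun m => (n.choose m : ℝ) * degFallingFactorial lam m x
        * degFallingFactorial lam ((n+1)-m) y) (n+1)]
    rw [Finset.sum_range_succ'
      (fun m => ((n+1).choose m : ℝ) * degFallingFactorial lam m x
        * degFallingFactorial lam ((n+1)-m) y) (n+1)]
    simp only [Nat.succ_sub_succ, Nat.choose_succ_succ, Nat.succ_eq_add_one, Nat.cast_add,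
      Nat.choose_zero_right, Nat.cast_one, Nat.sub_zero]
    rw [← add_assoc, ← Finset.sum_add_distrib]
    congr 1
    apply Finset.sum_congr rfl
    intro m hm
    ring

section Measure

variable {Ω : Type*} [MeasurableSpace Ω] {μ : Measure Ω} {Y : ℕ → Ω → ℝ} {lam : ℝ}

lemma degFF_measurable {f : Ω → ℝ} (hf : Measurable f) (lam : ℝ) (n : ℕ) :
    Measurable (fun ω => degFallingFactorial lam n (f ω)) := by
  unfold degFallingFactorial
  exact Finset.measurable_prod _ (fun i _ => hf.sub measurable_const)

lemma integrable_abs_pow (hident : ∀ j, IdentDistrib (Y j) (Y 0) μ μ)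
    (hmom : ∀ m : ℕ, Integrable (fun ω => |Y 0 ω| ^ m) μ) (j m : ℕ) :
    Integrable (fun ω => |Y j ω| ^ m) μ := by
  have h : IdentDistrib (fun ω => |Y j ω| ^ m) (fun ω => |Y 0 ω| ^ m) μ μ :=
    (hident j).comp ((measurable_id.abs).pow_const m)
  exact h.integrable_iff.mpr (hmom m)

lemma integrable_degFF_Y (hmeas : ∀ j, Measurable (Y j))
    (hident : ∀ j, IdentDistrib (Y j) (Y 0) μ μ)
    (hmom : ∀ m : ℕ, Integrable (fun ω => |Y 0 ω| ^ m) μ) (j m : ℕ) :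
    Integrable (fun ω => degFallingFactorial lam m (Y j ω)) μ := by
  have hb : Integrable (fun ω => (|Y j ω| + m*|lam|)^m) μ := by
    have he : (fun ω => (|Y j ω| + m*|lam|)^m)
        = fun ω => ∑ k ∈ Finset.range (m+1), |Y j ω|^k * (m*|lam|)^(m-k) * (m.choose k) := by
      funext ω; rw [add_pow]
    rw [he]
    exact integrable_finset_sum _
      (fun k _ => ((integrable_abs_pow hident hmom j k).mul_const _).mul_const _)
  refine hb.mono' ((degFF_measurable (hmeas j) lam m).aestronglyMeasurable) ?_
  refine Filter.Eventually.of_forall (fun ω => ?_)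
  rw [Real.norm_eq_abs]
  unfold degFallingFactorial
  calc |∏ i ∈ Finset.range m, (Y j ω - i*lam)|
      = ∏ i ∈ Finset.range m, |Y j ω - i*lam| := by rw [Finset.abs_prod]
    _ ≤ ∏ i ∈ Finset.range m, (|Y j ω| + m*|lam|) := by
        refine Finset.prod_le_prod (fun i _ => abs_nonneg _) (fun i hi => ?_)
        have h1 : |Y j ω - (i:ℝ)*lam| ≤ |Y j ω| + |(i:ℝ)*lam| := abs_sub _ _
        have h2 : |(i:ℝ)*lam| = (i:ℝ) * |lam| := by
          rw [abs_mul, Nat.abs_cast]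
        have h3 : (i:ℝ) ≤ m := by
          exact_mod_cast (Finset.mem_range.mp hi).le
        nlinarith [abs_nonneg lam]
    _ = (|Y j ω| + m*|lam|)^m := by rw [Finset.prod_const, Finset.card_range]

lemma partialSum_succ (j : ℕ) (ω : Ω) :
    partialSum Y (j+1) ω = Y j ω + partialSum Y j ω := by
  simp [partialSum, Finset.sum_range_succ, add_comm]

lemma partialSum_eq_sum : partialSum Y j₀ = ∑ i ∈ Finset.range j₀, Y i := by
  funext ω; simp [partialSum]

lemma indep_helper (hindep : iIndepFun Y μ)
    (hmeas : ∀ j, Measurable (Y j)) (j : ℕ) {f g : ℝ → ℝ}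
    (hf : Measurable f) (hg : Measurable g) :
    IndepFun (fun ω => f (Y j ω)) (fun ω => g (partialSum Y j ω)) μ := by
  have h : IndepFun (Y j) (partialSum Y j) μ := by
    rw [partialSum_eq_sum]
    exact (hindep.indepFun_sum_range_succ hmeas j).symm
  exact h.comp hf hg

lemma integrable_degFF_S (hindep : iIndepFun Y μ)
    (hmeas : ∀ j, Measurable (Y j))
    (hident : ∀ j, IdentDistrib (Y j) (Y 0) μ μ)
    (hmom : ∀ m : ℕ, Integrable (fun ω => |Y 0 ω| ^ m) μ)
    [IsProbabilityMeasure μ] (j : ℕ) :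
    ∀ n : ℕ, Integrable (fun ω => degFallingFactorial lam n (partialSum Y j ω)) μ := by
  induction j with
  | zero =>
    intro n
    have : (fun ω => degFallingFactorial lam n (partialSum Y 0 ω))
        = fun _ => degFallingFactorial lam n 0 := by
      funext ω; simp [partialSum]
    rw [this]; exact integrable_const _
  | succ j ih =>
    intro n
    have he : (fun ω => degFallingFactorial lam n (partialSum Y (j+1) ω))
        = fun ω => ∑ m ∈ Finset.range (n+1), (n.choose m : ℝ)
            * ((fun t => degFallingFactorial lam m t) (Y j ω)
              * (fun t => degFallingFactorial lam (n-m) t) (partialSum Y j ω)) := by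
      funext ω
      rw [partialSum_succ, degFF_add]
      exact Finset.sum_congr rfl (fun m _ => by ring)
    rw [he]
    refine integrable_finset_sum _ (fun m _ => Integrable.const_mul ?_ _)
    exact IndepFun.integrable_mul
      (indep_helper hindep hmeas j (degFF_measurable measurable_id lam m)
        (degFF_measurable measurable_id lam (n-m)))
      (integrable_degFF_Y hmeas hident hmom j m) (ih (n-m))

end Measure


section Step

variable {Ω : Type*} [MeasurableSpace Ω] {μ : Measure Ω} {Y : ℕ → Ω → ℝ} {lam : ℝ}
variable [IsProbabilityMeasure μ]
variable (hindep : iIndepFun Y μ)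
variable (hmeas : ∀ j, Measurable (Y j))
variable (hident : ∀ j, IdentDistrib (Y j) (Y 0) μ μ)
variable (hmom : ∀ m : ℕ, Integrable (fun ω => |Y 0 ω| ^ m) μ)

include hindep hmeas hident hmom

lemma integral_step (j n : ℕ) :
    ∫ ω, degFallingFactorial lam n (partialSum Y (j+1) ω) ∂μ
      = ∑ m ∈ Finset.range (n+1), (n.choose m : ℝ)
          * (∫ ω, degFallingFactorial lam m (Y 0 ω) ∂μ)
          * (∫ ω, degFallingFactorial lam (n-m) (partialSum Y j ω) ∂μ) := by
  have he : (fun ω => degFallingFactorial lam n (partialSum Y (j+1) ω))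
      = fun ω => ∑ m ∈ Finset.range (n+1), (n.choose m : ℝ)
          * ((fun t => degFallingFactorial lam m t) (Y j ω)
            * (fun t => degFallingFactorial lam (n-m) t) (partialSum Y j ω)) := by
    funext ω
    rw [partialSum_succ, degFF_add]
    exact Finset.sum_congr rfl (fun m _ => by ring)
  rw [he, integral_finset_sum]
  · refine Finset.sum_congr rfl (fun m _ => ?_)
    rw [MeasureTheory.integral_const_mul, mul_assoc]
    congr 1
    have hint := IndepFun.integral_mul_eq_mul_integral
      (indep_helper hindep hmeas j (degFF_measurable measurable_id lam m)
        (degFF_measurable measurable_id lam (n-m)))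
      (integrable_degFF_Y hmeas hident hmom j m).aestronglyMeasurable
      (integrable_degFF_S hindep hmeas hident hmom j (n-m)).aestronglyMeasurable
    simp only [id_eq] at hint
    rw [show (fun ω => (fun t => degFallingFactorial lam m t) (Y j ω)
          * (fun t => degFallingFactorial lam (n-m) t) (partialSum Y j ω))
        = ((fun ω => degFallingFactorial lam m (Y j ω))
            * fun ω => degFallingFactorial lam (n-m) (partialSum Y j ω)) from rfl, hint]
    congr 1
    have hid := ((hident j).comp (degFF_measurable measurable_id lam m)).integral_eq
    simp only [Function.comp_def, id_eq] at hid
    exact hid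
  · intro m _
    refine Integrable.const_mul ?_ _
    exact IndepFun.integrable_mul
      (indep_helper hindep hmeas j (degFF_measurable measurable_id lam m)
        (degFF_measurable measurable_id lam (n-m)))
      (integrable_degFF_Y hmeas hident hmom j m)
      (integrable_degFF_S hindep hmeas hident hmom j (n-m))

end Step


lemma neg_one_pow_sub (k j : ℕ) (h : j ≤ k) : (-1:ℝ)^(k-j) = (-1)^k * (-1)^j := by
  have h1 : (-1:ℝ)^(k-j) * (-1)^j = (-1)^k := by rw [← pow_add, Nat.sub_add_cancel h]
  have h2 : ((-1:ℝ)^j) * ((-1)^j) = 1 := by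
    rw [← pow_add, ← two_mul, pow_mul]; norm_num
  calc (-1:ℝ)^(k-j) = (-1)^(k-j) * ((-1)^j * (-1)^j) := by rw [h2, mul_one]
    _ = ((-1)^(k-j) * (-1)^j) * (-1)^j := by ring
    _ = (-1)^k * (-1)^j := by rw [h1]

lemma E_id (f : ℕ → ℝ) (k : ℕ) :
    ∑ j ∈ Finset.range (k+2), (-1:ℝ)^j * ((k+1).choose j) * f j
      = - ∑ j ∈ Finset.range (k+1), (-1:ℝ)^j * (k.choose j) * (f (j+1) - f j) := by
  have hQR : ∑ i ∈ Finset.range (k+1), (-1:ℝ)^(i+1) * (k.choose (i+1)) * f (i+1)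
      = ∑ j ∈ Finset.range (k+1), (-1:ℝ)^j * (k.choose j) * f j - f 0 := by
    have h0 := Finset.sum_range_succ' (fun j => (-1:ℝ)^j * (k.choose j) * f j) (k+1)
    rw [Finset.sum_range_succ] at h0
    simp only [Nat.choose_succ_self, Nat.cast_zero, mul_zero, zero_mul, add_zero, pow_zero,
      one_mul, Nat.choose_zero_right, Nat.cast_one] at h0
    linarith [h0]
  rw [Finset.sum_range_succ' (fun j => (-1:ℝ)^j * ((k+1).choose j) * f j) (k+1)]
  simp only [Nat.choose_succ_succ, Nat.succ_eq_add_one, Nat.cast_add, Nat.choose_zero_right,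
    Nat.cast_one, pow_zero, one_mul, mul_one]
  have hsplit : ∀ i ∈ Finset.range (k+1),
      (-1:ℝ)^(i+1) * ((k.choose i : ℝ) + (k.choose (i+1) : ℝ)) * f (i+1)
      = (-((-1:ℝ)^i * (k.choose i) * f (i+1))) + ((-1:ℝ)^(i+1) * (k.choose (i+1)) * f (i+1)) := by
    intro i _; ring
  rw [Finset.sum_congr rfl hsplit, Finset.sum_add_distrib]
  have hsub : ∑ j ∈ Finset.range (k+1), (-1:ℝ)^j * (k.choose j) * (f (j+1) - f j)
      = ∑ j ∈ Finset.range (k+1), (-1:ℝ)^j * (k.choose j) * f (j+1)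
        - ∑ j ∈ Finset.range (k+1), (-1:ℝ)^j * (k.choose j) * f j := by
    rw [← Finset.sum_sub_distrib]
    exact Finset.sum_congr rfl (fun j _ => by ring)
  rw [hsub]
  have hneg : ∑ i ∈ Finset.range (k+1), (-((-1:ℝ)^i * (k.choose i) * f (i+1)))
      = - ∑ i ∈ Finset.range (k+1), (-1:ℝ)^i * (k.choose i) * f (i+1) := by
    rw [Finset.sum_neg_distrib]
  rw [hneg, hQR]
  ring

lemma alt_diff (f : ℕ → ℝ) (k : ℕ) :
    ∑ j ∈ Finset.range (k+2), (-1:ℝ)^(k+1-j) * ((k+1).choose j) * f j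
      = ∑ j ∈ Finset.range (k+1), (-1:ℝ)^(k-j) * (k.choose j) * (f (j+1) - f j) := by
  have hL : ∀ j ∈ Finset.range (k+2), (-1:ℝ)^(k+1-j) * ((k+1).choose j) * f j
      = (-1:ℝ)^(k+1) * ((-1:ℝ)^j * ((k+1).choose j) * f j) := by
    intro j hj
    rw [neg_one_pow_sub (k+1) j (Nat.lt_succ_iff.mp (Finset.mem_range.mp hj))]; ring
  have hR : ∀ j ∈ Finset.range (k+1), (-1:ℝ)^(k-j) * (k.choose j) * (f (j+1) - f j)
      = (-1:ℝ)^k * ((-1:ℝ)^j * (k.choose j) * (f (j+1) - f j)) := by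
    intro j hj
    rw [neg_one_pow_sub k j (Nat.lt_succ_iff.mp (Finset.mem_range.mp hj))]; ring
  rw [Finset.sum_congr rfl hL, Finset.sum_congr rfl hR, ← Finset.mul_sum, ← Finset.mul_sum, E_id]
  ring

section D

variable {Ω : Type*} [MeasurableSpace Ω]

/-- `aInt μ Y lam j n = E[(S_j)_{n,lam}]`. -/
noncomputable def aInt (μ : Measure Ω) (Y : ℕ → Ω → ℝ) (lam : ℝ) (j n : ℕ) : ℝ :=
  ∫ ω, degFallingFactorial lam n (partialSum Y j ω) ∂μ

/-- `bInt μ Y lam m = E[(Y)_{m,lam}]`. -/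
noncomputable def bInt (μ : Measure Ω) (Y : ℕ → Ω → ℝ) (lam : ℝ) (m : ℕ) : ℝ :=
  ∫ ω, degFallingFactorial lam m (Y 0 ω) ∂μ

/-- `pdfD μ Y lam k n = k! * {n brace k}_{Y,lam}`. -/
noncomputable def pdfD (μ : Measure Ω) (Y : ℕ → Ω → ℝ) (lam : ℝ) (k n : ℕ) : ℝ :=
  ∑ j ∈ Finset.range (k+1), (-1:ℝ)^(k-j) * (k.choose j) * aInt μ Y lam j n

variable {μ : Measure Ω} {Y : ℕ → Ω → ℝ} {lam : ℝ}
variable [IsProbabilityMeasure μ]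
variable (hindep : iIndepFun Y μ)
variable (hmeas : ∀ j, Measurable (Y j))
variable (hident : ∀ j, IdentDistrib (Y j) (Y 0) μ μ)
variable (hmom : ∀ m : ℕ, Integrable (fun ω => |Y 0 ω| ^ m) μ)

lemma bInt_zero : bInt μ Y lam 0 = 1 := by
  simp [bInt, degFallingFactorial]

lemma aInt_zero_left (n : ℕ) : aInt μ Y lam 0 n = degFallingFactorial lam n 0 := by
  have : (fun ω => degFallingFactorial lam n (partialSum Y 0 ω))
      = fun _ => degFallingFactorial lam n 0 := by
    funext ω; simp [partialSum]
  simp [aInt, this]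

lemma aInt_zero_right (j : ℕ) : aInt μ Y lam j 0 = 1 := by
  simp [aInt, degFallingFactorial]

include hindep hmeas hident hmom

lemma pdfD_succ (k n : ℕ) :
    pdfD μ Y lam (k+1) n
      = ∑ m ∈ Finset.range n, ((n.choose (m+1)):ℝ) * bInt μ Y lam (m+1)
          * pdfD μ Y lam k (n-(m+1)) := by
  rw [pdfD, alt_diff (fun j => aInt μ Y lam j n) k]
  have hstep : ∀ j ∈ Finset.range (k+1),
      (-1:ℝ)^(k-j) * (k.choose j) * (aInt μ Y lam (j+1) n - aInt μ Y lam j n)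
      = ∑ m ∈ Finset.range n, ((n.choose (m+1)):ℝ) * bInt μ Y lam (m+1)
          * ((-1:ℝ)^(k-j) * (k.choose j) * aInt μ Y lam j (n-(m+1))) := by
    intro j _
    have hd : aInt μ Y lam (j+1) n - aInt μ Y lam j n
        = ∑ m ∈ Finset.range n, ((n.choose (m+1)):ℝ) * bInt μ Y lam (m+1)
            * aInt μ Y lam j (n-(m+1)) := by
      have hs := integral_step hindep hmeas hident hmom j n (lam := lam)
      rw [show (∫ ω, degFallingFactorial lam n (partialSum Y (j+1) ω) ∂μ)
          = aInt μ Y lam (j+1) n from rfl] at hs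
      rw [hs]
      rw [show (∑ m ∈ Finset.range (n+1), ((n.choose m : ℝ)
            * ∫ ω, degFallingFactorial lam m (Y 0 ω) ∂μ)
            * ∫ ω, degFallingFactorial lam (n-m) (partialSum Y j ω) ∂μ)
          = ∑ m ∈ Finset.range (n+1),
            (n.choose m : ℝ) * bInt μ Y lam m * aInt μ Y lam j (n-m) from rfl]
      rw [Finset.sum_range_succ'
        (fun m => (n.choose m : ℝ) * bInt μ Y lam m * aInt μ Y lam j (n-m)) n]
      simp [bInt_zero]
    rw [hd, Finset.mul_sum]
    exact Finset.sum_congr rfl (fun m _ => by ring)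
  rw [Finset.sum_congr rfl hstep, Finset.sum_comm]
  exact Finset.sum_congr rfl (fun m _ => by rw [← Finset.mul_sum, pdfD])

lemma pdfD_vanish : ∀ n k : ℕ, n < k → pdfD μ Y lam k n = 0 := by
  intro n
  induction n using Nat.strong_induction_on with
  | _ n ih =>
    intro k hk
    match k, hk with
    | k'+1, hk =>
    by_cases hn0 : n = 0
    · subst hn0
      rw [pdfD]
      have hc : ∀ j ∈ Finset.range (k'+1+1),
          (-1:ℝ)^(k'+1-j) * ((k'+1).choose j) * aInt μ Y lam j 0
          = (-1:ℝ)^(k'+1) * ((-1:ℝ)^j * ((k'+1).choose j)) := by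
        intro j hj
        rw [aInt_zero_right,
          neg_one_pow_sub (k'+1) j (Nat.lt_succ_iff.mp (Finset.mem_range.mp hj))]
        ring
      rw [Finset.sum_congr rfl hc, ← Finset.mul_sum]
      have hz : ∑ j ∈ Finset.range (k'+1+1), (-1:ℝ)^j * ((k'+1).choose j) = 0 := by
        have hZ := Int.alternating_sum_range_choose_of_ne (n := k'+1) (by omega)
        have h2 : ((∑ i ∈ Finset.range (k'+1+1), ((-1)^i * ((k'+1).choose i) : ℤ) : ℤ) : ℝ)
            = ∑ j ∈ Finset.range (k'+1+1), (-1:ℝ)^j * ((k'+1).choose j) := by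
          push_cast; rfl
        rw [← h2, hZ]; norm_num
      rw [hz, mul_zero]
    · rw [pdfD_succ hindep hmeas hident hmom]
      refine Finset.sum_eq_zero (fun m hm => ?_)
      rw [ih (n-(m+1)) (by omega) k' (by omega), mul_zero]

end D

section Fubini

variable {Ω : Type*} [MeasurableSpace Ω] {μ : Measure Ω} {Y : ℕ → Ω → ℝ} {lam : ℝ}

lemma fubini_eq (n : ℕ) (x : ℝ) :
    probDegFubini μ Y lam n x = ∑ k ∈ Finset.range (n+1), pdfD μ Y lam k n * x^k := by
  rw [probDegFubini]
  refine Finset.sum_congr rfl fun k _ => ?_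
  congr 1
  rw [probDegStirling2]
  have hne : (k.factorial : ℝ) ≠ 0 := Nat.cast_ne_zero.mpr k.factorial_ne_zero
  rw [show pdfD μ Y lam k n
      = ∑ j ∈ Finset.range (k + 1),
          (-1 : ℝ) ^ (k - j) * k.choose j
            * ∫ ω, degFallingFactorial lam n (partialSum Y j ω) ∂μ from rfl]
  field_simp

end Fubini

end ProbDegAux

theorem probDegFubini_recurrence
    {Ω : Type*} [MeasurableSpace Ω] (μ : Measure Ω) [IsProbabilityMeasure μ]
    (Y : ℕ → Ω → ℝ) (lam : ℝ)
    (hmeas : ∀ j, Measurable (Y j))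
    (hindep : iIndepFun Y μ)
    (hident : ∀ j, IdentDistrib (Y j) (Y 0) μ μ)
    (hmom : ∀ m : ℕ, Integrable (fun ω => |Y 0 ω| ^ m) μ)
    (n : ℕ) (hn : 1 ≤ n) (x : ℝ) :
    probDegFubini μ Y lam n x =
      x * ∑ k ∈ Finset.Icc 1 n,
        (n.choose k : ℝ) * (∫ ω, degFallingFactorial lam k (Y 0 ω) ∂μ) *
          probDegFubini μ Y lam (n - k) x := by
  classical
  open ProbDegAux in
  rw [ProbDegAux.fubini_eq n x,
    Finset.sum_range_succ' (fun k => ProbDegAux.pdfD μ Y lam k n * x^k) n]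
  have h0 : ProbDegAux.pdfD μ Y lam 0 n * x^0 = 0 := by
    have hz : degFallingFactorial lam n 0 = 0 :=
      Finset.prod_eq_zero (Finset.mem_range.mpr hn) (by simp)
    rw [ProbDegAux.pdfD]
    simp [ProbDegAux.aInt_zero_left, hz]
  rw [h0, add_zero]
  have hsucc : ∀ k ∈ Finset.range n,
      ProbDegAux.pdfD μ Y lam (k+1) n * x^(k+1)
      = ∑ m ∈ Finset.range n, ((n.choose (m+1)):ℝ) * ProbDegAux.bInt μ Y lam (m+1)
          * (ProbDegAux.pdfD μ Y lam k (n-(m+1)) * x^(k+1)) := by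
    intro k _
    rw [ProbDegAux.pdfD_succ hindep hmeas hident hmom, Finset.sum_mul]
    exact Finset.sum_congr rfl (fun m _ => by ring)
  rw [Finset.sum_congr rfl hsucc, Finset.sum_comm]
  have hinner : ∀ m ∈ Finset.range n,
      ∑ k ∈ Finset.range n, ((n.choose (m+1)):ℝ) * ProbDegAux.bInt μ Y lam (m+1)
          * (ProbDegAux.pdfD μ Y lam k (n-(m+1)) * x^(k+1))
      = ((n.choose (m+1)):ℝ) * ProbDegAux.bInt μ Y lam (m+1)
          * (x * probDegFubini μ Y lam (n-(m+1)) x) := by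
    intro m hm
    rw [← Finset.mul_sum]
    congr 1
    have htr : ∑ k ∈ Finset.range n, ProbDegAux.pdfD μ Y lam k (n-(m+1)) * x^(k+1)
        = ∑ k ∈ Finset.range (n-(m+1)+1), ProbDegAux.pdfD μ Y lam k (n-(m+1)) * x^(k+1) := by
      refine (Finset.sum_subset (Finset.range_subset_range.mpr ?_) ?_).symm
      · have := Finset.mem_range.mp hm; omega
      · intro k hk hk'
        rw [ProbDegAux.pdfD_vanish hindep hmeas hident hmom (n-(m+1)) k ?_, zero_mul]
        have h1 := Finset.mem_range.mp hk
        have h2 : ¬ k < n-(m+1)+1 := fun h => hk' (Finset.mem_range.mpr h)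
        omega
    rw [htr, ProbDegAux.fubini_eq (n-(m+1)) x, Finset.mul_sum]
    exact Finset.sum_congr rfl (fun k _ => by ring)
  rw [Finset.sum_congr rfl hinner]
  have hIcc : ∑ k ∈ Finset.Icc 1 n,
      (n.choose k : ℝ) * (∫ ω, degFallingFactorial lam k (Y 0 ω) ∂μ) *
        probDegFubini μ Y lam (n - k) x
      = ∑ m ∈ Finset.range n,
        ((n.choose (m+1)):ℝ) * ProbDegAux.bInt μ Y lam (m+1)
          * probDegFubini μ Y lam (n-(m+1)) x := by
    rw [← Finset.Ico_add_one_right_eq_Icc, Finset.sum_Ico_eq_sum_range]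
    refine Finset.sum_congr (by congr 1) (fun m _ => ?_)
    rw [show 1 + m = m + 1 from by omega]
    rfl
  rw [hIcc, Finset.mul_sum]
  exact Finset.sum_congr rfl (fun m _ => by ring)
end

section
/- Let Y be a real random variable with all moments finite, (Y_j)_{j≥1} mutually independent copies of Y, S_0 = 0, S_k = Y_1 + ⋯ + Y_k. For every n ≥ 0 and every real x, F^Y_{n+1,λ}(x) = x · Σ_{k=0}^{n} Σ_{i=0}^{k} C(k,i) C(n,k) F^Y_{i,λ}(x) F^Y_{k−i,λ}(x) E[(Y)_{n−k+1,λ}]. -/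
open MeasureTheory ProbabilityTheory Finset

set_option linter.unusedSectionVars false

namespace PDFAux

open PowerSeries

lemma dFF_zero (lam : ℝ) (x : ℝ) : degFallingFactorial lam 0 x = 1 := by
  simp [degFallingFactorial]

lemma dFF_succ (lam : ℝ) (n : ℕ) (x : ℝ) :
    degFallingFactorial lam (n + 1) x = degFallingFactorial lam n x * (x - n * lam) := by
  simp [degFallingFactorial, Finset.prod_range_succ]

lemma measurable_dFF (lam : ℝ) (n : ℕ) : Measurable (degFallingFactorial lam n) := by
  unfold degFallingFactorial
  exact Finset.measurable_prod _ (fun j _ => (measurable_id.sub_const _))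

lemma abs_dFF_le (lam : ℝ) (n : ℕ) (x : ℝ) :
    |degFallingFactorial lam n x| ≤ (|x| + n * |lam|) ^ n := by
  unfold degFallingFactorial
  rw [Finset.abs_prod]
  calc ∏ j ∈ Finset.range n, |x - j * lam|
      ≤ ∏ _j ∈ Finset.range n, (|x| + n * |lam|) := by
        apply Finset.prod_le_prod (fun j _ => abs_nonneg _)
        intro j hj
        have hj' : (j : ℝ) ≤ n := by
          exact_mod_cast (Finset.mem_range.mp hj).le
        calc |x - j * lam| ≤ |x| + |(j : ℝ) * lam| := abs_sub _ _
          _ ≤ |x| + n * |lam| := by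
              rw [abs_mul]
              have : |(j:ℝ)| * |lam| ≤ n * |lam| := by
                apply mul_le_mul_of_nonneg_right _ (abs_nonneg _)
                rwa [abs_of_nonneg (by positivity : (0:ℝ) ≤ (j:ℝ))]
              linarith
    _ = (|x| + n * |lam|) ^ n := by rw [Finset.prod_const, Finset.card_range]

lemma dFF_add (lam : ℝ) (n : ℕ) (u v : ℝ) :
    degFallingFactorial lam n (u + v) =
      ∑ k ∈ Finset.range (n + 1),
        (n.choose k : ℝ) * degFallingFactorial lam k u * degFallingFactorial lam (n - k) v := by
  induction n with
  | zero => simp [dFF_zero]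
  | succ n ih =>
    rw [dFF_succ, ih, Finset.sum_mul]
    have hsplit : ∀ k ∈ Finset.range (n + 1),
        (n.choose k : ℝ) * degFallingFactorial lam k u * degFallingFactorial lam (n - k) v *
            (u + v - n * lam)
          = (n.choose k : ℝ) * (degFallingFactorial lam (k + 1) u *
              degFallingFactorial lam (n - k) v)
            + (n.choose k : ℝ) * (degFallingFactorial lam k u *
              degFallingFactorial lam (n - k + 1) v) := by
      intro k hk
      have hk' : k ≤ n := Nat.lt_succ_iff.mp (Finset.mem_range.mp hk)
      have hcast : ((n - k : ℕ) : ℝ) = (n : ℝ) - k := by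
        have := Nat.cast_sub hk' (R := ℝ); exact this
      rw [dFF_succ, dFF_succ]
      have : u + v - n * lam = (u - k * lam) + (v - (n - k : ℕ) * lam) := by
        rw [hcast]; ring
      rw [this]; ring
    rw [Finset.sum_congr rfl hsplit, Finset.sum_add_distrib]
    rw [show (n+1)+1 = (n+2) from rfl, Finset.sum_range_succ' (fun k =>
      ((n+1).choose k : ℝ) * degFallingFactorial lam k u * degFallingFactorial lam (n + 1 - k) v)]
    simp only [Nat.choose_succ_succ, Nat.cast_add, Nat.choose_zero_right, Nat.cast_one, one_mul,
      dFF_zero, Nat.sub_zero, Nat.succ_sub_succ, add_mul]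
    rw [Finset.sum_add_distrib]
    have hB : ∑ k ∈ Finset.range (n + 1),
        (n.choose k : ℝ) * (degFallingFactorial lam k u * degFallingFactorial lam (n - k + 1) v)
        = (∑ k ∈ Finset.range (n + 1),
            (n.choose (k+1) : ℝ) * degFallingFactorial lam (k+1) u *
              degFallingFactorial lam (n - k) v) + degFallingFactorial lam (n + 1) v := by
      rw [Finset.sum_range_succ' (fun k =>
        (n.choose k : ℝ) * (degFallingFactorial lam k u * degFallingFactorial lam (n - k + 1) v))]
      rw [Finset.sum_range_succ (fun k =>
        (n.choose (k+1) : ℝ) * degFallingFactorial lam (k+1) u * degFallingFactorial lam (n - k) v)]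
      simp only [Nat.choose_zero_right, Nat.cast_one, one_mul, dFF_zero, Nat.sub_zero,
        Nat.choose_succ_self, Nat.cast_zero, zero_mul, add_zero]
      congr 1
      apply Finset.sum_congr rfl
      intro k hk
      have hk' : k < n := Finset.mem_range.mp hk
      have : n - (k + 1) + 1 = n - k := by omega
      rw [this]; ring
    rw [hB]
    have : ∀ k ∈ Finset.range (n+1),
        (n.choose k : ℝ) * (degFallingFactorial lam (k + 1) u * degFallingFactorial lam (n - k) v)
        = (n.choose k : ℝ) * degFallingFactorial lam (k + 1) u * degFallingFactorial lam (n - k) v := by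
      intro k _; ring
    rw [Finset.sum_congr rfl this]
    ring


variable {Ω : Type*} [MeasurableSpace Ω] (μ : Measure Ω) [IsProbabilityMeasure μ]
  (Y : ℕ → Ω → ℝ) (lam : ℝ)

noncomputable def Mo (r : ℕ) : ℝ := ∫ ω, degFallingFactorial lam r (Y 0 ω) ∂μ

noncomputable def aa (j n : ℕ) : ℝ := ∫ ω, degFallingFactorial lam n (partialSum Y j ω) ∂μ

variable {μ Y}

section Integrability

variable (hmeas : ∀ j, Measurable (Y j))
    (hindep : iIndepFun Y μ)
    (hident : ∀ j, IdentDistrib (Y j) (Y 0) μ μ)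
    (hmom : ∀ m : ℕ, Integrable (fun ω => |Y 0 ω| ^ m) μ)

include hident hmom in
lemma int_absY (i m : ℕ) : Integrable (fun ω => |Y i ω| ^ m) μ := by
  have h := (hident i).comp (measurable_abs.pow_const m)
  exact h.integrable_iff.mpr (hmom m)

include hmeas hindep hident hmom in
lemma int_prod (s : Finset ℕ) (e : ℕ → ℕ) :
    Integrable (fun ω => ∏ i ∈ s, |Y i ω| ^ e i) μ := by
  classical
  induction s using Finset.induction_on with
  | empty => simpa using (integrable_const (1:ℝ))
  | @insert a s ha ih =>
    have hZmeas : ∀ i, Measurable (fun ω => |Y i ω| ^ e i) :=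
      fun i => (measurable_abs.pow_const (e i)).comp (hmeas i)
    have hZindep : iIndepFun (fun i ω => |Y i ω| ^ e i) μ :=
      hindep.comp (fun i y => |y| ^ e i) (fun i => measurable_abs.pow_const (e i))
    have hind : IndepFun (∏ j ∈ s, fun ω => |Y j ω| ^ e j) (fun ω => |Y a ω| ^ e a) μ :=
      hZindep.indepFun_finsetProd_of_notMem hZmeas ha
    have heq : (∏ j ∈ s, fun ω => |Y j ω| ^ e j) = fun ω => ∏ j ∈ s, |Y j ω| ^ e j := by
      funext ω; simp [Finset.prod_apply]
    rw [heq] at hind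
    have := hind.symm.integrable_mul (int_absY hident hmom a (e a)) ih
    have heq2 : ((fun ω => |Y a ω| ^ e a) * fun ω => ∏ j ∈ s, |Y j ω| ^ e j)
        = fun ω => ∏ i ∈ insert a s, |Y i ω| ^ e i := by
      funext ω; simp [Finset.prod_insert ha]
    rwa [heq2] at this

include hmeas hindep hident hmom in
lemma int_sumAbs_pow (J m : ℕ) :
    Integrable (fun ω => (∑ i ∈ Finset.range J, |Y i ω|) ^ m) μ := by
  have heq : (fun ω => (∑ i ∈ Finset.range J, |Y i ω|) ^ m)
      = fun ω => ∑ k ∈ Finset.piAntidiag (Finset.range J) m,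
          (Nat.multinomial (Finset.range J) k : ℝ) * ∏ i ∈ Finset.range J, |Y i ω| ^ k i := by
    funext ω
    rw [Finset.sum_pow_eq_sum_piAntidiag]
  rw [heq]
  apply integrable_finset_sum
  intro k _
  exact (int_prod hmeas hindep hident hmom (Finset.range J) k).const_mul _

include hmeas hindep hident hmom in
lemma int_dominated {f : Ω → ℝ} (hf : Measurable f) (J m : ℕ) (C : ℝ)
    (hbound : ∀ ω, |f ω| ≤ C * (1 + ∑ i ∈ Finset.range J, |Y i ω|) ^ m) :
    Integrable f μ := by
  have hg : Integrable (fun ω => C * (1 + ∑ i ∈ Finset.range J, |Y i ω|) ^ m) μ := by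
    have heq : (fun ω => C * (1 + ∑ i ∈ Finset.range J, |Y i ω|) ^ m)
        = fun ω => C * ∑ k ∈ Finset.range (m+1),
            (∑ i ∈ Finset.range J, |Y i ω|) ^ (m - k) * (m.choose k : ℝ) := by
      funext ω
      rw [add_pow]
      simp [one_pow]
    rw [heq]
    exact (integrable_finset_sum _ (fun k _ =>
      ((int_sumAbs_pow hmeas hindep hident hmom J (m-k)).mul_const _))).const_mul _
  exact Integrable.mono' hg hf.aestronglyMeasurable
    (Filter.Eventually.of_forall (fun ω => by simpa using hbound ω))

include hmeas hindep hident hmom in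
lemma int_dFF_of_bound {g : Ω → ℝ} (hg : Measurable g) (J : ℕ)
    (hb : ∀ ω, |g ω| ≤ ∑ i ∈ Finset.range J, |Y i ω|) (n : ℕ) :
    Integrable (fun ω => degFallingFactorial lam n (g ω)) μ := by
  apply int_dominated hmeas hindep hident hmom
    ((measurable_dFF lam n).comp hg) J n ((1 + n * |lam|) ^ n)
  intro ω
  set T := ∑ i ∈ Finset.range J, |Y i ω| with hT
  have hT0 : 0 ≤ T := Finset.sum_nonneg (fun i _ => abs_nonneg _)
  calc |degFallingFactorial lam n (g ω)| ≤ (|g ω| + n * |lam|) ^ n := abs_dFF_le lam n _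
    _ ≤ ((1 + n * |lam|) * (1 + T)) ^ n := by
        apply pow_le_pow_left₀ (by positivity)
        have h1 : |g ω| ≤ T := hb ω
        have h2 : (0:ℝ) ≤ n * |lam| := by positivity
        nlinarith
    _ = (1 + n * |lam|) ^ n * (1 + T) ^ n := mul_pow _ _ _

include hmeas hindep hident hmom in
lemma int_dFF_S (j n : ℕ) :
    Integrable (fun ω => degFallingFactorial lam n (partialSum Y j ω)) μ := by
  apply int_dFF_of_bound (lam := lam) hmeas hindep hident hmom
    (Finset.measurable_sum _ (fun i _ => hmeas i)) j _ n
  intro ω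
  exact Finset.abs_sum_le_sum_abs _ _

include hmeas hindep hident hmom in
lemma int_dFF_Y (i n : ℕ) :
    Integrable (fun ω => degFallingFactorial lam n (Y i ω)) μ := by
  apply int_dFF_of_bound (lam := lam) hmeas hindep hident hmom (hmeas i) (i+1) _ n
  intro ω
  have : |Y i ω| ≤ ∑ k ∈ Finset.range (i+1), |Y k ω| :=
    Finset.single_le_sum (f := fun k => |Y k ω|) (fun k _ => abs_nonneg _)
      (Finset.self_mem_range_succ i)
  exact this

end Integrability

section Rec

variable (hmeas : ∀ j, Measurable (Y j))
    (hindep : iIndepFun Y μ)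
    (hident : ∀ j, IdentDistrib (Y j) (Y 0) μ μ)
    (hmom : ∀ m : ℕ, Integrable (fun ω => |Y 0 ω| ^ m) μ)

lemma Mo_zero : Mo μ Y lam 0 = 1 := by
  simp [Mo, degFallingFactorial]

lemma aa_zero (n : ℕ) : aa μ Y lam 0 n = if n = 0 then 1 else 0 := by
  have hS : ∀ ω : Ω, partialSum Y 0 ω = 0 := by intro ω; simp [partialSum]
  rcases n with _ | n
  · simp [aa, degFallingFactorial]
  · have : ∀ ω : Ω, degFallingFactorial lam (n+1) (partialSum Y 0 ω) = 0 := by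
      intro ω
      rw [hS]
      unfold degFallingFactorial
      apply Finset.prod_eq_zero (Finset.mem_range.mpr (Nat.succ_pos n))
      simp
    simp only [aa]
    rw [integral_congr_ae (Filter.Eventually.of_forall this)]
    simp

include hident in
lemma Mo_eq (j r : ℕ) :
    (∫ ω, degFallingFactorial lam r (Y j ω) ∂μ) = Mo μ Y lam r :=
  ((hident j).comp (measurable_dFF lam r)).integral_eq

include hmeas hindep in
lemma indep_SY (j : ℕ) :
    IndepFun (partialSum Y j) (Y j) μ := by
  have h := hindep.indepFun_finsetSum_of_notMem hmeas (Finset.notMem_range_self (n := j))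
  have heq : (∑ i ∈ Finset.range j, Y i) = partialSum Y j := by
    funext ω; simp [partialSum, Finset.sum_apply]
  rwa [heq] at h

include hmeas hindep hident hmom in
lemma aa_rec (j n : ℕ) :
    aa μ Y lam (j+1) n
      = ∑ k ∈ Finset.range (n+1), (n.choose k : ℝ) * aa μ Y lam j k * Mo μ Y lam (n - k) := by
  have hSsucc : ∀ ω, partialSum Y (j+1) ω = partialSum Y j ω + Y j ω := by
    intro ω; simp [partialSum, Finset.sum_range_succ]
  have hint : ∀ k : ℕ, Integrable
      (fun ω => degFallingFactorial lam k (partialSum Y j ω)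
        * degFallingFactorial lam (n - k) (Y j ω)) μ := by
    intro k
    have hind := ((indep_SY hmeas hindep j).comp (measurable_dFF lam k)
      (measurable_dFF lam (n - k)))
    exact hind.integrable_mul (int_dFF_S (lam := lam) hmeas hindep hident hmom j k)
      (int_dFF_Y (lam := lam) hmeas hindep hident hmom j (n - k))
  have step1 : aa μ Y lam (j+1) n
      = ∫ ω, ∑ k ∈ Finset.range (n+1), (n.choose k : ℝ)
          * (degFallingFactorial lam k (partialSum Y j ω)
            * degFallingFactorial lam (n - k) (Y j ω)) ∂μ := by
    unfold aa
    apply integral_congr_ae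
    apply Filter.Eventually.of_forall
    intro ω
    show degFallingFactorial lam n (partialSum Y (j+1) ω) = _
    rw [hSsucc ω, dFF_add]
    exact Finset.sum_congr rfl (fun k _ => by ring)
  rw [step1, integral_finset_sum _ (fun k _ => ((hint k).const_mul _))]
  apply Finset.sum_congr rfl
  intro k _
  rw [integral_const_mul]
  have hind := ((indep_SY hmeas hindep j).comp (measurable_dFF lam k)
    (measurable_dFF lam (n - k)))
  have hfac := hind.integral_mul_eq_mul_integral
    (((measurable_dFF lam k).comp
      (Finset.measurable_sum _ (fun i _ => hmeas i))).aestronglyMeasurable)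
    (((measurable_dFF lam (n-k)).comp (hmeas j)).aestronglyMeasurable)
  have : (∫ ω, degFallingFactorial lam k (partialSum Y j ω)
      * degFallingFactorial lam (n - k) (Y j ω) ∂μ)
      = aa μ Y lam j k * Mo μ Y lam (n - k) := by
    rw [show (fun ω => degFallingFactorial lam k (partialSum Y j ω)
      * degFallingFactorial lam (n - k) (Y j ω))
      = (degFallingFactorial lam k ∘ partialSum Y j) * (degFallingFactorial lam (n-k) ∘ Y j)
      from rfl] at *
    rw [hfac]
    unfold aa
    rw [← Mo_eq (lam := lam) hident j (n - k)]
    rfl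
  rw [this]
  ring

end Rec


section Comb

variable (M : ℕ → ℝ) (A : ℕ → ℕ → ℝ)

noncomputable def bb (k n : ℕ) : ℝ :=
  ∑ j ∈ Finset.range (k+1), (-1:ℝ)^(k-j) * (k.choose j) * A j n

noncomputable def Fx (x : ℝ) (n : ℕ) : ℝ :=
  ∑ k ∈ Finset.range (n+1), bb A k n * x^k

lemma bb_diff (k n : ℕ) :
    bb A (k+1) n = ∑ j ∈ Finset.range (k+1),
      (-1:ℝ)^(k-j) * (k.choose j) * (A (j+1) n - A j n) := by
  have hrhs : ∑ j ∈ Finset.range (k+1), (-1:ℝ)^(k-j) * (k.choose j) * (A (j+1) n - A j n)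
      = (∑ j ∈ Finset.range (k+1), (-1:ℝ)^(k-j) * (k.choose j) * A (j+1) n)
        - ∑ j ∈ Finset.range (k+1), (-1:ℝ)^(k-j) * (k.choose j) * A j n := by
    rw [← Finset.sum_sub_distrib]
    exact Finset.sum_congr rfl (fun j _ => by ring)
  rw [hrhs]
  unfold bb
  -- peel the j = 0 term on the LHS
  rw [Finset.sum_range_succ' (fun j => (-1:ℝ)^(k+1-j) * ((k+1).choose j) * A j n)]
  -- peel the j = 0 term of the subtracted sum
  rw [Finset.sum_range_succ' (fun j => (-1:ℝ)^(k-j) * (k.choose j) * A j n)]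
  have h1 : ∀ j ∈ Finset.range (k+1),
      (-1:ℝ)^(k+1-(j+1)) * (((k+1).choose (j+1) : ℕ) : ℝ) * A (j+1) n
      = (-1:ℝ)^(k-j) * (k.choose j) * A (j+1) n
        + (-1:ℝ)^(k-j) * (k.choose (j+1)) * A (j+1) n := by
    intro j hj
    have : k + 1 - (j+1) = k - j := by omega
    rw [this, Nat.choose_succ_succ]
    push_cast
    ring
  rw [Finset.sum_congr rfl h1, Finset.sum_add_distrib]
  have h2 : ∑ j ∈ Finset.range (k+1), (-1:ℝ)^(k-j) * (k.choose (j+1)) * A (j+1) n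
      = ∑ j ∈ Finset.range k, (-1:ℝ)^(k-j) * (k.choose (j+1)) * A (j+1) n := by
    rw [Finset.sum_range_succ]
    simp
  have h3 : ∑ j ∈ Finset.range k, (-1:ℝ)^(k-j) * (k.choose (j+1)) * A (j+1) n
      = - ∑ j ∈ Finset.range k, (-1:ℝ)^(k-(j+1)) * (k.choose (j+1)) * A (j+1) n := by
    rw [← Finset.sum_neg_distrib]
    apply Finset.sum_congr rfl
    intro j hj
    have hj' : j < k := Finset.mem_range.mp hj
    have : k - j = (k - (j+1)) + 1 := by omega
    rw [this, pow_succ]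
    ring
  have h4 : (-1:ℝ)^(k+1-0) * (((k+1).choose 0 : ℕ) : ℝ) * A 0 n
      = - ((-1:ℝ)^(k-0) * ((k.choose 0 : ℕ) : ℝ) * A 0 n) := by
    simp [pow_succ]
  rw [h2, h3, h4]
  ring

section
variable (hM0 : M 0 = 1) (hA0 : ∀ n, A 0 n = if n = 0 then 1 else 0)
  (hArec : ∀ j n, A (j+1) n = ∑ k ∈ Finset.range (n+1), (n.choose k : ℝ) * A j k * M (n-k))

include hM0 hArec in
lemma bb_rec (k n : ℕ) :
    bb A (k+1) n = ∑ m ∈ Finset.range n, (n.choose m : ℝ) * M (n-m) * bb A k m := by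
  rw [bb_diff]
  have hdiff : ∀ j, A (j+1) n - A j n
      = ∑ m ∈ Finset.range n, (n.choose m : ℝ) * M (n-m) * A j m := by
    intro j
    rw [hArec j n, Finset.sum_range_succ]
    simp only [Nat.choose_self, Nat.cast_one, one_mul, Nat.sub_self, hM0, mul_one]
    have : ∀ m ∈ Finset.range n, (n.choose m : ℝ) * A j m * M (n-m)
        = (n.choose m : ℝ) * M (n-m) * A j m := fun m _ => by ring
    rw [Finset.sum_congr rfl this]
    ring
  have : ∀ j ∈ Finset.range (k+1), (-1:ℝ)^(k-j) * (k.choose j) * (A (j+1) n - A j n)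
      = ∑ m ∈ Finset.range n, (n.choose m : ℝ) * M (n-m)
          * ((-1:ℝ)^(k-j) * (k.choose j) * A j m) := by
    intro j _
    rw [hdiff j, Finset.mul_sum]
    exact Finset.sum_congr rfl (fun m _ => by ring)
  rw [Finset.sum_congr rfl this, Finset.sum_comm]
  apply Finset.sum_congr rfl
  intro m _
  rw [← Finset.mul_sum]
  rfl

include hM0 hArec in
lemma bb_zero : ∀ k, ∀ r < k, bb A k r = 0 := by
  intro k
  induction k with
  | zero => intro r hr; omega
  | succ k ih =>
    intro r hr
    rw [bb_rec M A hM0 hArec]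
    apply Finset.sum_eq_zero
    intro m hm
    have : m < k := by
      have := Finset.mem_range.mp hm; omega
    rw [ih m this, mul_zero]

include hA0 in
lemma Fx_zero (x : ℝ) : Fx A x 0 = 1 := by
  simp [Fx, bb, hA0]

include hM0 hA0 hArec in
lemma Fx_star (x : ℝ) (n : ℕ) :
    Fx A x (n+1) = x * ∑ m ∈ Finset.range (n+1),
      ((n+1).choose m : ℝ) * M (n+1-m) * Fx A x m := by
  unfold Fx
  rw [Finset.sum_range_succ' (fun k => bb A k (n+1) * x^k)]
  have hb0 : bb A 0 (n+1) = 0 := by simp [bb, hA0]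
  rw [hb0]
  simp only [pow_zero, mul_one, one_mul, add_zero]
  have hterm : ∀ k ∈ Finset.range (n+1), bb A (k+1) (n+1) * x^(k+1)
      = ∑ m ∈ Finset.range (n+1),
          ((n+1).choose m : ℝ) * M (n+1-m) * (bb A k m * x^(k+1)) := by
    intro k _
    rw [bb_rec M A hM0 hArec, Finset.sum_mul]
    exact Finset.sum_congr rfl (fun m _ => by ring)
  rw [Finset.sum_congr rfl hterm, Finset.sum_comm, Finset.mul_sum]
  apply Finset.sum_congr rfl
  intro m hm
  have hmn : m ≤ n := Nat.lt_succ_iff.mp (Finset.mem_range.mp hm)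
  have hsum : ∑ k ∈ Finset.range (n+1), bb A k m * x^k
      = ∑ k ∈ Finset.range (m+1), bb A k m * x^k := by
    symm
    apply Finset.sum_subset
    · intro k hk
      exact Finset.mem_range.mpr (by have := Finset.mem_range.mp hk; omega)
    · intro k _ hk
      have : m < k := by
        simp only [Finset.mem_range, not_lt] at hk ⊢
        omega
      rw [bb_zero M A hM0 hArec k m this, zero_mul]
  have : ∑ k ∈ Finset.range (n+1),
      ((n+1).choose m : ℝ) * M (n+1-m) * (bb A k m * x^(k+1))
      = x * (((n+1).choose m : ℝ) * M (n+1-m)) * ∑ k ∈ Finset.range (n+1), bb A k m * x^k := by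
    rw [Finset.mul_sum]
    exact Finset.sum_congr rfl (fun k _ => by ring)
  rw [this, hsum]
  show _ = x * (((n+1).choose m : ℝ) * M (n+1-m) * Fx A x m)
  unfold Fx
  ring


noncomputable def fs (x : ℝ) : PowerSeries ℝ :=
  PowerSeries.mk (fun n => Fx A x n / n.factorial)

noncomputable def Gs : PowerSeries ℝ := PowerSeries.mk (fun r => M r / r.factorial)

include hM0 hA0 hArec in
lemma key1 (x : ℝ) :
    (1 - PowerSeries.C x * (Gs M - 1)) * fs A x = 1 := by
  ext n
  rw [sub_mul, one_mul, map_sub, PowerSeries.coeff_mul]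
  have hcu : ∀ r : ℕ, (PowerSeries.coeff r) (PowerSeries.C x * (Gs M - 1))
      = x * (M r / r.factorial - if r = 0 then 1 else 0) := by
    intro r
    rw [PowerSeries.coeff_C_mul, map_sub, PowerSeries.coeff_one, Gs, PowerSeries.coeff_mk]
  have hcf : ∀ r : ℕ, (PowerSeries.coeff r) (fs A x) = Fx A x r / r.factorial := by
    intro r; rw [fs, PowerSeries.coeff_mk]
  rw [Finset.Nat.sum_antidiagonal_eq_sum_range_succ_mk]
  simp only [hcu, hcf]
  rcases n with _ | m
  · simp [hM0, Fx_zero A hA0]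
  · rw [Finset.sum_range_succ' (fun k =>
      x * (M k / k.factorial - if k = 0 then 1 else 0)
        * (Fx A x (m + 1 - k) / (m + 1 - k).factorial))]
    simp only [hM0, Nat.factorial_zero, Nat.cast_one, div_one, sub_self, mul_zero, zero_mul,
      add_zero, if_pos rfl]
    have hif : ∀ k : ℕ, (if k + 1 = 0 then (1:ℝ) else 0) = 0 := fun k => by simp
    simp only [hif, sub_zero, PowerSeries.coeff_one, Nat.succ_ne_zero, if_neg,
      reduceIte]
    rw [sub_eq_zero]
    simp only [sub_self, mul_zero, zero_mul, add_zero]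
    have hstar := Fx_star M A hM0 hA0 hArec x m
    rw [← Finset.sum_range_reflect (fun j => ((m+1).choose j : ℝ) * M (m+1-j) * Fx A x j)
      (m+1)] at hstar
    rw [hstar, Finset.mul_sum, Finset.sum_div]
    symm
    apply Finset.sum_congr rfl
    intro k hk
    have hk' : k ≤ m := Nat.lt_succ_iff.mp (Finset.mem_range.mp hk)
    have e1 : m + 1 - 1 - k = m - k := by omega
    have e2 : m + 1 - (m - k) = k + 1 := by omega
    have e3 : m + 1 - (k + 1) = m - k := by omega
    rw [e1, e2, e3]
    have hle : m - k ≤ m + 1 := by omega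
    rw [Nat.cast_choose ℝ hle, e2]
    have n1 : ((m+1).factorial : ℝ) ≠ 0 := Nat.cast_ne_zero.mpr (Nat.factorial_ne_zero _)
    have n2 : ((m-k).factorial : ℝ) ≠ 0 := Nat.cast_ne_zero.mpr (Nat.factorial_ne_zero _)
    have n3 : ((k+1).factorial : ℝ) ≠ 0 := Nat.cast_ne_zero.mpr (Nat.factorial_ne_zero _)
    field_simp

include hM0 hA0 hArec in
lemma key2 (x : ℝ) :
    (d⁄dX ℝ) (fs A x) = fs A x * fs A x * (PowerSeries.C x * (d⁄dX ℝ) (Gs M)) := by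
  have h1 := key1 M A hM0 hA0 hArec x
  set u := PowerSeries.C x * (Gs M - 1) with hu
  have hDu : (d⁄dX ℝ) u = PowerSeries.C x * (d⁄dX ℝ) (Gs M) := by
    rw [hu, Derivation.leibniz, map_sub, Derivation.map_one_eq_zero, sub_zero,
      PowerSeries.derivative_C, smul_zero, add_zero, smul_eq_mul]
  have h2 : (1 - u) * (d⁄dX ℝ) (fs A x) = fs A x * ((d⁄dX ℝ) u) := by
    have h3 := congrArg (d⁄dX ℝ) h1
    rw [Derivation.leibniz, Derivation.map_one_eq_zero, map_sub,
      Derivation.map_one_eq_zero, zero_sub, smul_eq_mul, smul_eq_mul] at h3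
    linear_combination h3
  calc (d⁄dX ℝ) (fs A x) = 1 * (d⁄dX ℝ) (fs A x) := (one_mul _).symm
    _ = ((1 - u) * fs A x) * (d⁄dX ℝ) (fs A x) := by rw [h1]
    _ = fs A x * ((1 - u) * (d⁄dX ℝ) (fs A x)) := by ring
    _ = fs A x * (fs A x * ((d⁄dX ℝ) u)) := by rw [h2]
    _ = fs A x * fs A x * (PowerSeries.C x * (d⁄dX ℝ) (Gs M)) := by rw [hDu]; ring

include hM0 hA0 hArec in
lemma comb_main (x : ℝ) (n : ℕ) :
    Fx A x (n+1) = x * ∑ k ∈ Finset.range (n+1), ∑ i ∈ Finset.range (k+1),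
      (k.choose i : ℝ) * (n.choose k : ℝ) * Fx A x i * Fx A x (k-i) * M (n-k+1) := by
  have hE := congrArg (PowerSeries.coeff n) (key2 M A hM0 hA0 hArec x)
  have hcf : ∀ r : ℕ, (PowerSeries.coeff r) (fs A x) = Fx A x r / r.factorial := by
    intro r; rw [fs, PowerSeries.coeff_mk]
  have hc2 : ∀ r : ℕ, (PowerSeries.coeff r) (PowerSeries.C x * (d⁄dX ℝ) (Gs M))
      = x * (M (r+1) / (r+1).factorial * ((r:ℝ)+1)) := by
    intro r
    rw [PowerSeries.coeff_C_mul, PowerSeries.coeff_derivative, Gs, PowerSeries.coeff_mk]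
  have hcff : ∀ r : ℕ, (PowerSeries.coeff r) (fs A x * fs A x)
      = ∑ i ∈ Finset.range (r+1), Fx A x i / i.factorial
          * (Fx A x (r-i) / (r-i).factorial) := by
    intro r
    rw [PowerSeries.coeff_mul, Finset.Nat.sum_antidiagonal_eq_sum_range_succ_mk]
    simp only [hcf]
  rw [PowerSeries.coeff_derivative, PowerSeries.coeff_mul,
    Finset.Nat.sum_antidiagonal_eq_sum_range_succ_mk] at hE
  simp only [hcff, hc2, hcf] at hE
  have hnf : ((n.factorial : ℝ)) ≠ 0 := Nat.cast_ne_zero.mpr (Nat.factorial_ne_zero _)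
  have hL : Fx A x (n+1) / (((n+1).factorial : ℕ) : ℝ) * ((n:ℝ)+1)
      = Fx A x (n+1) / (n.factorial : ℝ) := by
    rw [Nat.factorial_succ]
    push_cast
    rw [mul_comm ((n:ℝ)+1) _, div_mul_eq_div_div, div_mul_cancel₀]
    positivity
  rw [hL] at hE
  have hF : Fx A x (n+1)
      = (∑ k ∈ Finset.range (n+1),
          (∑ i ∈ Finset.range (k+1), Fx A x i / i.factorial
            * (Fx A x (k-i) / (k-i).factorial))
          * (x * (M (n-k+1) / ((n-k)+1).factorial * (((n-k : ℕ) : ℝ)+1)))) * n.factorial := by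
    rw [← hE]
    field_simp
  rw [hF, Finset.sum_mul, Finset.mul_sum]
  apply Finset.sum_congr rfl
  intro k hk
  have hkn : k ≤ n := Nat.lt_succ_iff.mp (Finset.mem_range.mp hk)
  rw [Finset.sum_mul, Finset.sum_mul, Finset.mul_sum]
  apply Finset.sum_congr rfl
  intro i hi
  have hik : i ≤ k := Nat.lt_succ_iff.mp (Finset.mem_range.mp hi)
  have hch : ((k.choose i : ℕ) : ℝ) * ((n.choose k : ℕ) : ℝ)
      = (n.factorial : ℝ) / (i.factorial * (k-i).factorial * (n-k).factorial) := by
    have nif : ((i.factorial : ℕ) : ℝ) ≠ 0 := Nat.cast_ne_zero.mpr (Nat.factorial_ne_zero _)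
    have nkif : (((k-i).factorial : ℕ) : ℝ) ≠ 0 := Nat.cast_ne_zero.mpr (Nat.factorial_ne_zero _)
    have nnkf : (((n-k).factorial : ℕ) : ℝ) ≠ 0 := Nat.cast_ne_zero.mpr (Nat.factorial_ne_zero _)
    have nkf : ((k.factorial : ℕ) : ℝ) ≠ 0 := Nat.cast_ne_zero.mpr (Nat.factorial_ne_zero _)
    rw [Nat.cast_choose ℝ hik, Nat.cast_choose ℝ hkn]
    field_simp
  rw [mul_assoc ((k.choose i : ℕ) : ℝ), ← mul_assoc ((k.choose i : ℕ) : ℝ), hch]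
  set m := n - k with hm
  have hfact : ((((m+1)).factorial : ℕ) : ℝ) = (((m : ℕ) : ℝ) + 1) * (m.factorial : ℝ) := by
    rw [Nat.factorial_succ]; push_cast; ring
  rw [hfact]
  have nif : ((i.factorial : ℕ) : ℝ) ≠ 0 := Nat.cast_ne_zero.mpr (Nat.factorial_ne_zero _)
  have nkif : (((k-i).factorial : ℕ) : ℝ) ≠ 0 := Nat.cast_ne_zero.mpr (Nat.factorial_ne_zero _)
  have nmf : ((m.factorial : ℕ) : ℝ) ≠ 0 := Nat.cast_ne_zero.mpr (Nat.factorial_ne_zero _)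
  have nm1 : (((m : ℕ) : ℝ)) + 1 ≠ 0 := by positivity
  field_simp

end

end Comb


section Glue

variable {Ω : Type*} [MeasurableSpace Ω] (μ : Measure Ω) [IsProbabilityMeasure μ]
  (Y : ℕ → Ω → ℝ) (lam : ℝ)

lemma Fubini_eq (n : ℕ) (x : ℝ) :
    probDegFubini μ Y lam n x = Fx (aa μ Y lam) x n := by
  unfold probDegFubini Fx probDegStirling2 bb aa
  apply Finset.sum_congr rfl
  intro k _
  have hk : ((k.factorial : ℕ) : ℝ) ≠ 0 := Nat.cast_ne_zero.mpr (Nat.factorial_ne_zero _)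
  field_simp

end Glue

end PDFAux

theorem probDegFubini_succ
    {Ω : Type*} [MeasurableSpace Ω] (μ : Measure Ω) [IsProbabilityMeasure μ]
    (Y : ℕ → Ω → ℝ) (lam : ℝ)
    (hmeas : ∀ j, Measurable (Y j))
    (hindep : iIndepFun Y μ)
    (hident : ∀ j, IdentDistrib (Y j) (Y 0) μ μ)
    (hmom : ∀ m : ℕ, Integrable (fun ω => |Y 0 ω| ^ m) μ)
    (n : ℕ) (x : ℝ) :
    probDegFubini μ Y lam (n + 1) x =
      x * ∑ k ∈ Finset.range (n + 1), ∑ i ∈ Finset.range (k + 1),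
        (k.choose i : ℝ) * (n.choose k : ℝ) * probDegFubini μ Y lam i x *
          probDegFubini μ Y lam (k - i) x *
          ∫ ω, degFallingFactorial lam (n - k + 1) (Y 0 ω) ∂μ := by
  have hM0 := PDFAux.Mo_zero (μ := μ) (Y := Y) (lam := lam)
  have hA0 := PDFAux.aa_zero (μ := μ) (Y := Y) (lam := lam)
  have hArec := PDFAux.aa_rec (lam := lam) hmeas hindep hident hmom
  have hmain := PDFAux.comb_main (PDFAux.Mo μ Y lam) (PDFAux.aa μ Y lam) hM0 hA0 hArec x n
  rw [PDFAux.Fubini_eq]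
  simp only [PDFAux.Fubini_eq]
  exact hmain
end

section
/- Let Y be a real random variable with all moments finite, (Y_j)_{j≥1} mutually independent copies of Y, S_0 = 0, S_k = Y_1 + ⋯ + Y_k. For every n ≥ 0 and every real x with |x| < 1, the series Σ_{i=0}^{∞} E[(S_i)_{n,λ}] x^i converges and (1/(1−x)) · F^Y_{n,λ}(x/(1−x)) = Σ_{i=0}^{∞} E[(S_i)_{n,λ}] x^i. -/
open MeasureTheory ProbabilityTheory Finset

lemma degFF_continuous (lam : ℝ) (n : ℕ) : Continuous (degFallingFactorial lam n) :=
  continuous_finset_prod _ fun _ _ => continuous_id.sub continuous_const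

lemma degFF_vandermonde (lam a b : ℝ) (n : ℕ) :
    degFallingFactorial lam n (a + b) =
      ∑ k ∈ Finset.range (n + 1),
        (n.choose k : ℝ) * degFallingFactorial lam k a * degFallingFactorial lam (n - k) b := by
  induction n with
  | zero => simp [degFallingFactorial]
  | succ n ih =>
    set A := fun k => degFallingFactorial lam k a with hA
    set B := fun k => degFallingFactorial lam k b with hB
    rw [degFF_succ, ih]
    have key : ∀ k ∈ Finset.range (n + 1),
        (n.choose k : ℝ) * A k * B (n - k) * (a + b - n * lam)
          = (n.choose k : ℝ) * A (k + 1) * B (n - k)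
            + (n.choose k : ℝ) * A k * B (n + 1 - k) := by
      intro k hk
      have hk' : k ≤ n := Finset.mem_range_succ_iff.mp hk
      have hc : ((n - k : ℕ) : ℝ) = (n : ℝ) - k := by
        rw [Nat.cast_sub hk']
      have h1 : A (k + 1) = A k * (a - k * lam) := degFF_succ lam k a
      have h2 : B (n + 1 - k) = B (n - k) * (b - ((n - k : ℕ) : ℝ) * lam) := by
        have : n + 1 - k = (n - k) + 1 := by omega
        rw [this]; exact degFF_succ lam (n - k) b
      rw [h1, h2, hc]; ring
    rw [Finset.sum_mul, Finset.sum_congr rfl key, Finset.sum_add_distrib]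
    -- RHS: split with sum_range_succ'
    rw [Finset.sum_range_succ' (fun k => ((n+1).choose k : ℝ) * A k * B (n + 1 - k))]
    have hpascal : ∀ k ∈ Finset.range (n + 1),
        (((n+1).choose (k+1) : ℝ)) * A (k+1) * B (n + 1 - (k+1))
          = (n.choose k : ℝ) * A (k+1) * B (n - k)
            + (n.choose (k+1) : ℝ) * A (k+1) * B (n - k) := by
      intro k hk
      have : (n+1).choose (k+1) = n.choose k + n.choose (k+1) := Nat.choose_succ_succ n k
      rw [this, Nat.succ_sub_succ]
      push_cast; ring
    rw [Finset.sum_congr rfl hpascal, Finset.sum_add_distrib]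
    have h3 : ∑ k ∈ Finset.range (n+1), (n.choose (k+1) : ℝ) * A (k+1) * B (n - k)
          + ((n+1).choose 0 : ℝ) * A 0 * B (n + 1 - 0)
        = ∑ k ∈ Finset.range (n+1), (n.choose k : ℝ) * A k * B (n + 1 - k) := by
      have h := Finset.sum_range_succ' (fun k => (n.choose k : ℝ) * A k * B (n + 1 - k)) (n + 1)
      rw [Finset.sum_range_succ (fun k => (n.choose k : ℝ) * A k * B (n + 1 - k)) (n + 1)] at h
      simp only [Nat.choose_succ_self, Nat.cast_zero, zero_mul, add_zero, Nat.succ_sub_succ,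
        Nat.choose_zero_right, Nat.cast_one, Nat.sub_zero, one_mul] at h ⊢
      linarith [h]
    rw [add_assoc, h3]

lemma integrable_degFF {Ω : Type*} [MeasurableSpace Ω] (μ : Measure Ω)
    {f : Ω → ℝ} (hf : Measurable f) (hmom : ∀ m : ℕ, Integrable (fun ω => |f ω| ^ m) μ)
    (lam : ℝ) (n : ℕ) :
    Integrable (fun ω => degFallingFactorial lam n (f ω)) μ := by
  set C : ℝ := n * |lam| with hC
  have hC0 : 0 ≤ C := by positivity
  have hg : Integrable (fun ω => (|f ω| + C) ^ n) μ := by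
    have : (fun ω => (|f ω| + C) ^ n)
        = fun ω => ∑ i ∈ Finset.range (n + 1), |f ω| ^ i * (C ^ (n - i) * (n.choose i : ℝ)) := by
      funext ω
      rw [add_pow]
      exact Finset.sum_congr rfl fun i _ => by ring
    rw [this]
    exact integrable_finset_sum _ fun i _ => (hmom i).mul_const _
  refine hg.mono' ((degFF_continuous lam n).measurable.comp hf).aestronglyMeasurable
    (Filter.Eventually.of_forall fun ω => ?_)
  rw [Real.norm_eq_abs]
  calc |degFallingFactorial lam n (f ω)|
      = ∏ j ∈ Finset.range n, |f ω - j * lam| := by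
        rw [degFallingFactorial, Finset.abs_prod]
    _ ≤ ∏ j ∈ Finset.range n, (|f ω| + C) := by
        refine Finset.prod_le_prod (fun j _ => abs_nonneg _) fun j hj => ?_
        have hj' : (j : ℝ) ≤ n := by
          exact_mod_cast (Finset.mem_range.mp hj).le
        calc |f ω - j * lam| ≤ |f ω| + |(j : ℝ) * lam| := abs_sub _ _
          _ ≤ |f ω| + C := by
              rw [abs_mul, abs_of_nonneg (by positivity : (0:ℝ) ≤ (j:ℝ))]
              have : (j : ℝ) * |lam| ≤ n * |lam| := by
                apply mul_le_mul_of_nonneg_right hj' (abs_nonneg _)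
              linarith
    _ = (|f ω| + C) ^ n := by rw [Finset.prod_const, Finset.card_range]


theorem probDegFubini_geometric_transform
    {Ω : Type*} [MeasurableSpace Ω] (μ : Measure Ω) [IsProbabilityMeasure μ]
    (Y : ℕ → Ω → ℝ) (lam : ℝ)
    (hmeas : ∀ j, Measurable (Y j))
    (hindep : iIndepFun Y μ)
    (hident : ∀ j, IdentDistrib (Y j) (Y 0) μ μ)
    (hmom : ∀ m : ℕ, Integrable (fun ω => |Y 0 ω| ^ m) μ)
    (n : ℕ) (x : ℝ) (hx : |x| < 1) :
    HasSum
      (fun i : ℕ => (∫ ω, degFallingFactorial lam n (partialSum Y i ω) ∂μ) * x ^ i)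
      ((1 / (1 - x)) * probDegFubini μ Y lam n (x / (1 - x))) := by
  classical
  -- notation
  set F : ℕ → ℕ → ℝ := fun N j => ∫ ω, degFallingFactorial lam N (partialSum Y j ω) ∂μ with hF
  set mY : ℕ → ℝ := fun r => ∫ ω, degFallingFactorial lam r (Y 0 ω) ∂μ with hmY
  -- basic measurability
  have hmeasS : ∀ j, Measurable (partialSum Y j) := fun j =>
    Finset.measurable_sum _ fun i _ => hmeas i
  have habs : ∀ m : ℕ, Measurable (fun t : ℝ => |t| ^ m) := fun m =>
    (measurable_id.abs).pow_const m
  -- moments of individual variables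
  have hmomY : ∀ j m, Integrable (fun ω => |Y j ω| ^ m) μ := fun j m =>
    ((hident j).comp (habs m)).integrable_iff.mpr (hmom m)
  -- independence of partial sum and next step
  have hindepS : ∀ j, IndepFun (partialSum Y j) (Y j) μ := fun j => by
    have h := hindep.indepFun_finset_sum_of_notMem hmeas (Finset.notMem_range_self (n := j))
    have he : partialSum Y j = ∑ i ∈ Finset.range j, Y i := by
      funext ω; simp [partialSum]
    rwa [he]
  -- moments of partial sums
  have hmomS : ∀ j m, Integrable (fun ω => |partialSum Y j ω| ^ m) μ := by
    intro j
    induction j with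
    | zero =>
      intro m
      have : (fun ω : Ω => |partialSum Y 0 ω| ^ m) = fun _ => |(0:ℝ)| ^ m := by
        funext ω; simp [partialSum]
      rw [this]; exact integrable_const _
    | succ j IH =>
      intro m
      have hkey : Integrable (fun ω => (|partialSum Y j ω| + |Y j ω|) ^ m) μ := by
        have : (fun ω => (|partialSum Y j ω| + |Y j ω|) ^ m)
            = fun ω => ∑ i ∈ Finset.range (m + 1),
                (|partialSum Y j ω| ^ i * |Y j ω| ^ (m - i)) * (m.choose i : ℝ) := by
          funext ω; rw [add_pow]
        rw [this]
        refine integrable_finset_sum _ fun i _ => Integrable.mul_const ?_ _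
        have hind : IndepFun (fun ω => |partialSum Y j ω| ^ i)
            (fun ω => |Y j ω| ^ (m - i)) μ := (hindepS j).comp (habs i) (habs (m - i))
        exact hind.integrable_mul (IH i) (hmomY j (m - i))
      refine hkey.mono' (((hmeasS (j+1)).abs.pow_const m).aestronglyMeasurable)
        (Filter.Eventually.of_forall fun ω => ?_)
      rw [Real.norm_eq_abs, abs_of_nonneg (pow_nonneg (abs_nonneg _) m)]
      refine pow_le_pow_left₀ (abs_nonneg _) ?_ m
      have : partialSum Y (j+1) ω = partialSum Y j ω + Y j ω := Finset.sum_range_succ _ _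
      rw [this]; exact abs_add_le _ _
  -- integrability of degenerate falling factorials
  have hintS : ∀ N j, Integrable (fun ω => degFallingFactorial lam N (partialSum Y j ω)) μ :=
    fun N j => integrable_degFF μ (hmeasS j) (hmomS j) lam N
  have hintY : ∀ N j, Integrable (fun ω => degFallingFactorial lam N (Y j ω)) μ :=
    fun N j => integrable_degFF μ (hmeas j) (hmomY j) lam N
  have hmY0 : mY 0 = 1 := by
    simp [hmY, degFF_zero]
  -- the recursion
  have hrec : ∀ N j, F N (j+1) = ∑ k ∈ Finset.range (N+1),
      (N.choose k : ℝ) * mY (N-k) * F k j := by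
    intro N j
    have hsplit : ∀ ω : Ω, partialSum Y (j+1) ω = partialSum Y j ω + Y j ω :=
      fun ω => Finset.sum_range_succ _ _
    have h1 : F N (j+1) = ∫ ω, ∑ k ∈ Finset.range (N+1),
        (N.choose k : ℝ) * (degFallingFactorial lam k (partialSum Y j ω)
          * degFallingFactorial lam (N-k) (Y j ω)) ∂μ := by
      simp only [hF]
      congr 1; funext ω
      rw [hsplit ω, degFF_vandermonde]
      exact Finset.sum_congr rfl fun k _ => by ring
    have hindkN : ∀ k, IndepFun (fun ω => degFallingFactorial lam k (partialSum Y j ω))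
        (fun ω => degFallingFactorial lam (N-k) (Y j ω)) μ := fun k =>
      (hindepS j).comp (degFF_continuous lam k).measurable (degFF_continuous lam (N-k)).measurable
    have hintMul : ∀ k, Integrable (fun ω => degFallingFactorial lam k (partialSum Y j ω)
        * degFallingFactorial lam (N-k) (Y j ω)) μ := fun k =>
      (hindkN k).integrable_mul (hintS k j) (hintY (N-k) j)
    rw [h1, integral_finset_sum _ (fun k _ => ((hintMul k).const_mul _))]
    refine Finset.sum_congr rfl fun k _ => ?_
    rw [integral_const_mul]
    have hprod : ∫ ω, degFallingFactorial lam k (partialSum Y j ω)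
          * degFallingFactorial lam (N-k) (Y j ω) ∂μ
        = (∫ ω, degFallingFactorial lam k (partialSum Y j ω) ∂μ)
          * ∫ ω, degFallingFactorial lam (N-k) (Y j ω) ∂μ :=
      (hindkN k).integral_mul_eq_mul_integral (hintS k j).aestronglyMeasurable (hintY (N-k) j).aestronglyMeasurable
    rw [hprod]
    have hident' : (∫ ω, degFallingFactorial lam (N-k) (Y j ω) ∂μ) = mY (N-k) :=
      ((hident j).comp (degFF_continuous lam (N-k)).measurable).integral_eq
    rw [hident', hF, hmY]
    ring
  -- the forward difference of F N
  have hdiff : ∀ N, fwdDiff 1 (F N) = ∑ k ∈ Finset.range N,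
      ((N.choose k : ℝ) * mY (N-k)) • F k := by
    intro N; funext j
    have h0 : fwdDiff 1 (F N) j = F N (j+1) - F N j := rfl
    rw [h0, hrec N j, Finset.sum_range_succ]
    simp only [Nat.choose_self, Nat.cast_one, Nat.sub_self, hmY0, one_mul, mul_one]
    rw [add_sub_cancel_right, Finset.sum_apply]
    exact Finset.sum_congr rfl fun k _ => by simp [smul_eq_mul]
  -- vanishing of high-order differences
  have hvanish : ∀ N K, N < K → ∀ j, (fwdDiff 1)^[K] (F N) j = 0 := by
    intro N
    induction N using Nat.strong_induction_on with
    | _ N IH =>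
      intro K hK j
      obtain ⟨K', rfl⟩ : ∃ K', K = K' + 1 := ⟨K - 1, by omega⟩
      rw [Function.iterate_succ_apply, hdiff N, fwdDiff_iter_finset_sum, Finset.sum_apply]
      refine Finset.sum_eq_zero fun k hk => ?_
      rw [fwdDiff_iter_const_smul, Pi.smul_apply,
        IH k (Finset.mem_range.mp hk) K' (by have := Finset.mem_range.mp hk; omega) j, smul_zero]
  set D : ℕ → ℝ := fun k => (fwdDiff 1)^[k] (F n) 0 with hDdef
  -- Newton's formula
  have hnewton : ∀ i, F n i = ∑ k ∈ Finset.range (n+1), (i.choose k : ℝ) * D k := by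
    intro i
    have h0 := shift_eq_sum_fwdDiff_iter (1:ℕ) (F n) i 0
    have h0' : F n i = ∑ k ∈ Finset.range (i+1), (i.choose k : ℝ) * D k := by
      simpa [hDdef, nsmul_eq_mul] using h0
    rw [h0']
    have e1 : ∑ k ∈ Finset.range (i+1), (i.choose k:ℝ) * D k
        = ∑ k ∈ Finset.range (max i n + 1), (i.choose k:ℝ) * D k := by
      refine Finset.sum_subset (Finset.range_subset_range.mpr (by omega)) fun k _ hk => ?_
      have : i < k := by
        have := Finset.mem_range.not.mp hk; omega
      rw [Nat.choose_eq_zero_of_lt this, Nat.cast_zero, zero_mul]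
    have e2 : ∑ k ∈ Finset.range (n+1), (i.choose k:ℝ) * D k
        = ∑ k ∈ Finset.range (max i n + 1), (i.choose k:ℝ) * D k := by
      refine Finset.sum_subset (Finset.range_subset_range.mpr (by omega)) fun k _ hk => ?_
      have hnk : n < k := by
        have := Finset.mem_range.not.mp hk; omega
      simp only [hDdef]
      rw [hvanish n k hnk 0, mul_zero]
    rw [e1, ← e2]
  -- identification with probabilistic degenerate Stirling numbers
  have hD : ∀ k, D k = probDegStirling2 μ Y lam n k * k.factorial := by
    intro k
    have h := fwdDiff_iter_eq_sum_shift (1:ℕ) (F n) k 0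
    have hfac : (k.factorial : ℝ) ≠ 0 := Nat.cast_ne_zero.mpr k.factorial_ne_zero
    have hS2 : probDegStirling2 μ Y lam n k * k.factorial
        = ∑ j ∈ Finset.range (k + 1), (-1 : ℝ) ^ (k - j) * k.choose j * F n j := by
      rw [probDegStirling2]
      field_simp
      rfl
    simp only [hDdef]
    rw [hS2, h]
    refine Finset.sum_congr rfl fun j _ => ?_
    have : (0 : ℕ) + j • 1 = j := by simp
    rw [this, zsmul_eq_mul]
    push_cast
    ring
  -- summing the series
  have hx' : ‖x‖ < 1 := by rwa [Real.norm_eq_abs]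
  have h1x : (1:ℝ) - x ≠ 0 := by
    intro h
    rw [sub_eq_zero] at h
    rw [← h] at hx
    simp at hx
  have hsum : ∀ k ∈ Finset.range (n+1), HasSum (fun i => (i.choose k : ℝ) * D k * x ^ i)
      (D k * x ^ k * (1 / (1-x)^(k+1))) := by
    intro k _
    have base := hasSum_choose_mul_geometric_of_norm_lt_one k hx'
    have h2 := base.mul_left (D k * x ^ k)
    have h3 : HasSum (fun m => ((m + k).choose k : ℝ) * D k * x ^ (m + k))
        (D k * x ^ k * (1/(1-x)^(k+1))) := by
      have e : (fun m => ((m + k).choose k : ℝ) * D k * x ^ (m + k))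
          = fun i => D k * x ^ k * (((i + k).choose k : ℝ) * x ^ i) := by
        funext m; rw [pow_add]; ring
      rw [e]; exact h2
    have h4 := (hasSum_nat_add_iff (f := fun i => (i.choose k : ℝ) * D k * x ^ i) k).mp h3
    have h5 : ∑ i ∈ Finset.range k, (i.choose k : ℝ) * D k * x ^ i = 0 :=
      Finset.sum_eq_zero fun i hi => by
        rw [Nat.choose_eq_zero_of_lt (Finset.mem_range.mp hi), Nat.cast_zero, zero_mul, zero_mul]
    rwa [h5, add_zero] at h4
  have htot := hasSum_sum hsum
  have hfun : (fun i => ∑ k ∈ Finset.range (n+1), (i.choose k:ℝ) * D k * x^i)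
      = fun i => F n i * x^i := by
    funext i
    rw [← Finset.sum_mul, ← hnewton i]
  have hval : ∑ k ∈ Finset.range (n+1), D k * x ^ k * (1 / (1-x)^(k+1))
      = (1 / (1 - x)) * probDegFubini μ Y lam n (x / (1 - x)) := by
    rw [probDegFubini, Finset.mul_sum]
    refine Finset.sum_congr rfl fun k _ => ?_
    rw [hD k, div_pow, pow_succ, one_div, mul_inv, div_eq_mul_inv]
    ring
  rw [hfun, hval] at htot
  exact htot
end

section
/- Let Y be a real random variable with all moments finite, (Y_j)_{j≥1} mutually independent copies of Y, S_0 = 0, S_k = Y_1 + ⋯ + Y_k. For every n ≥ 0, Σ_{i=0}^{∞} E[(S_i)_{n,λ}] (1/2)^i = 2 · F^Y_{n,λ}(1). -/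
open MeasureTheory ProbabilityTheory Finset

set_option linter.unusedSectionVars false

namespace ProofAux


lemma dff_zero (lam x : ℝ) : degFallingFactorial lam 0 x = 1 := by
  simp [degFallingFactorial]

lemma dff_succ (lam : ℝ) (n : ℕ) (x : ℝ) :
    degFallingFactorial lam (n + 1) x = degFallingFactorial lam n x * (x - n * lam) := by
  simp [degFallingFactorial, Finset.prod_range_succ]

lemma measurable_dff (lam : ℝ) (n : ℕ) : Measurable (degFallingFactorial lam n) := by
  unfold degFallingFactorial
  exact Finset.measurable_prod _ fun j _ => measurable_id.sub_const _

lemma abs_dff_le (lam : ℝ) (n : ℕ) (x : ℝ) :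
    |degFallingFactorial lam n x| ≤ (|x| + n * |lam|) ^ n := by
  unfold degFallingFactorial
  rw [Finset.abs_prod]
  calc ∏ j ∈ Finset.range n, |x - j * lam|
      ≤ ∏ _j ∈ Finset.range n, (|x| + n * |lam|) := by
        refine Finset.prod_le_prod (fun _ _ => abs_nonneg _) (fun j hj => ?_)
        have hj' : (j : ℝ) ≤ n := by
          exact_mod_cast (Finset.mem_range.mp hj).le
        calc |x - j * lam| ≤ |x| + |(j : ℝ) * lam| := abs_sub _ _
          _ ≤ |x| + n * |lam| := by
              rw [abs_mul, Nat.abs_cast]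
              have := mul_le_mul_of_nonneg_right hj' (abs_nonneg lam)
              linarith
    _ = (|x| + n * |lam|) ^ n := by rw [Finset.prod_const, Finset.card_range]

/-- Degenerate Vandermonde / binomial identity. -/
lemma dff_add (lam : ℝ) (n : ℕ) (x y : ℝ) :
    degFallingFactorial lam n (x + y)
      = ∑ l ∈ Finset.range (n + 1), (n.choose l : ℝ) *
          degFallingFactorial lam l x * degFallingFactorial lam (n - l) y := by
  induction n with
  | zero => simp [degFallingFactorial]
  | succ n ih =>
    rw [dff_succ, ih, Finset.sum_mul]
    have split : ∀ l ∈ Finset.range (n + 1),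
        (n.choose l : ℝ) * degFallingFactorial lam l x * degFallingFactorial lam (n - l) y
            * (x + y - n * lam)
        = (n.choose l : ℝ) * degFallingFactorial lam (l + 1) x * degFallingFactorial lam (n - l) y
          + (n.choose l : ℝ) * degFallingFactorial lam l x * degFallingFactorial lam (n - l + 1) y := by
      intro l hl
      have hl' : l ≤ n := Finset.mem_range_succ_iff.mp hl
      have hcast : ((n - l : ℕ) : ℝ) = (n : ℝ) - l := by
        rw [Nat.cast_sub hl']
      rw [dff_succ lam l x, dff_succ lam (n - l) y]
      have hxy : x + y - n * lam = (x - l * lam) + (y - ((n - l : ℕ) : ℝ) * lam) := by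
        rw [hcast]; ring
      rw [hxy]; ring
    rw [Finset.sum_congr rfl split, Finset.sum_add_distrib]
    -- RHS: peel the first term
    rw [Finset.sum_range_succ' (fun l => ((n+1).choose l : ℝ) *
          degFallingFactorial lam l x * degFallingFactorial lam (n + 1 - l) y)]
    have h1 : ∀ i ∈ Finset.range (n + 1),
        (((n+1).choose (i+1) : ℕ) : ℝ) * degFallingFactorial lam (i+1) x
            * degFallingFactorial lam (n + 1 - (i+1)) y
        = (n.choose i : ℝ) * degFallingFactorial lam (i+1) x * degFallingFactorial lam (n - i) y
          + (n.choose (i+1) : ℝ) * degFallingFactorial lam (i+1) x * degFallingFactorial lam (n - i) y := by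
      intro i hi
      have : n + 1 - (i + 1) = n - i := by omega
      rw [this, Nat.choose_succ_succ, Nat.cast_add]
      ring
    rw [Finset.sum_congr rfl h1, Finset.sum_add_distrib]
    -- second sum on LHS: peel first term
    rw [Finset.sum_range_succ' (fun l => (n.choose l : ℝ) *
          degFallingFactorial lam l x * degFallingFactorial lam (n - l + 1) y)]
    have h2 : ∀ i ∈ Finset.range n,
        (n.choose (i+1) : ℝ) * degFallingFactorial lam (i+1) x
            * degFallingFactorial lam (n - (i+1) + 1) y
        = (n.choose (i+1) : ℝ) * degFallingFactorial lam (i+1) x * degFallingFactorial lam (n - i) y := by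
      intro i hi
      have : n - (i + 1) + 1 = n - i := by
        have := Finset.mem_range.mp hi; omega
      rw [this]
    rw [Finset.sum_congr rfl h2]
    have h3 : ∑ i ∈ Finset.range (n + 1), (n.choose (i+1) : ℝ) *
          degFallingFactorial lam (i+1) x * degFallingFactorial lam (n - i) y
        = ∑ i ∈ Finset.range n, (n.choose (i+1) : ℝ) *
          degFallingFactorial lam (i+1) x * degFallingFactorial lam (n - i) y := by
      rw [Finset.sum_range_succ, Nat.choose_succ_self]
      simp
    rw [h3]
    simp [Nat.choose_zero_right]
    ring

/-- Forward finite difference operator. -/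
def fdiff (g : ℕ → ℝ) : ℕ → ℕ → ℝ
  | 0, j => g j
  | k + 1, j => fdiff g k (j + 1) - fdiff g k j

lemma fdiff_shift (g : ℕ → ℝ) (k j : ℕ) :
    fdiff g (k + 1) j = fdiff (fun i => g (i + 1) - g i) k j := by
  induction k generalizing j with
  | zero => rfl
  | succ k ih =>
    show fdiff g (k+1) (j+1) - fdiff g (k+1) j = _
    rw [ih, ih]; rfl

lemma fdiff_sum {s : Finset ℕ} (c : ℕ → ℝ) (g : ℕ → ℕ → ℝ) (k j : ℕ) :
    fdiff (fun i => ∑ l ∈ s, c l * g l i) k j = ∑ l ∈ s, c l * fdiff (g l) k j := by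
  induction k generalizing j with
  | zero => rfl
  | succ k ih =>
    show fdiff _ k (j+1) - fdiff _ k j = _
    rw [ih, ih, ← Finset.sum_sub_distrib]
    congr 1 with l
    show c l * fdiff (g l) k (j+1) - c l * fdiff (g l) k j = _
    rw [← mul_sub]; rfl

/-- Newton's forward-difference formula. -/
lemma newton (g : ℕ → ℝ) (j a : ℕ) :
    ∑ k ∈ Finset.range (j + 1), (j.choose k : ℝ) * fdiff g k a = g (a + j) := by
  induction j generalizing a with
  | zero => simp [fdiff]
  | succ j ih =>
    have key : ∑ k ∈ Finset.range (j + 2), ((j+1).choose k : ℝ) * fdiff g k a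
        = ∑ k ∈ Finset.range (j + 1), (j.choose k : ℝ) * fdiff g k (a + 1) := by
      rw [Finset.sum_range_succ' (fun k => ((j+1).choose k : ℝ) * fdiff g k a)]
      have h1 : ∀ i ∈ Finset.range (j + 1),
          (((j+1).choose (i+1) : ℕ) : ℝ) * fdiff g (i+1) a
          = (j.choose i : ℝ) * fdiff g i (a+1) - (j.choose i : ℝ) * fdiff g i a
            + (j.choose (i+1) : ℝ) * fdiff g (i+1) a := by
        intro i _
        rw [Nat.choose_succ_succ, Nat.cast_add]
        have : fdiff g (i+1) a = fdiff g i (a+1) - fdiff g i a := rfl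
        rw [this]; ring
      rw [Finset.sum_congr rfl h1]
      rw [Finset.sum_add_distrib, Finset.sum_sub_distrib]
      have h2 : ∑ i ∈ Finset.range (j + 1), (j.choose (i+1) : ℝ) * fdiff g (i+1) a
          = ∑ i ∈ Finset.range (j + 1), (j.choose i : ℝ) * fdiff g i a
            - (j.choose 0 : ℝ) * fdiff g 0 a := by
        have : ∑ i ∈ Finset.range (j + 1), (j.choose (i+1) : ℝ) * fdiff g (i+1) a
            = ∑ i ∈ Finset.range j, (j.choose (i+1) : ℝ) * fdiff g (i+1) a := by
          rw [Finset.sum_range_succ, Nat.choose_succ_self]; simp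
        rw [this]
        rw [Finset.sum_range_succ' (fun i => (j.choose i : ℝ) * fdiff g i a)]
        ring
      rw [h2]
      simp [fdiff]
      try ring
    rw [key, ih]
    congr 1
    omega

/-- Explicit formula for finite differences. -/
lemma fdiff_eq_sum (g : ℕ → ℝ) (k j : ℕ) :
    fdiff g k j = (-1 : ℝ) ^ k *
      ∑ i ∈ Finset.range (k + 1), (-1 : ℝ) ^ i * (k.choose i : ℝ) * g (j + i) := by
  induction k generalizing j with
  | zero => simp [fdiff]
  | succ k ih =>
    have step : ∑ i ∈ Finset.range (k + 2), (-1 : ℝ) ^ i * ((k+1).choose i : ℝ) * g (j + i)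
        = ∑ i ∈ Finset.range (k + 1), (-1 : ℝ) ^ i * (k.choose i : ℝ) * g (j + i)
          - ∑ i ∈ Finset.range (k + 1), (-1 : ℝ) ^ i * (k.choose i : ℝ) * g (j + 1 + i) := by
      rw [Finset.sum_range_succ' (fun i => (-1 : ℝ) ^ i * ((k+1).choose i : ℝ) * g (j + i))]
      have h1 : ∀ i ∈ Finset.range (k + 1),
          (-1 : ℝ) ^ (i+1) * (((k+1).choose (i+1) : ℕ) : ℝ) * g (j + (i+1))
          = -((-1 : ℝ) ^ i * (k.choose i : ℝ) * g (j + 1 + i))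
            + (-1 : ℝ) ^ (i+1) * (k.choose (i+1) : ℝ) * g (j + (i + 1)) := by
        intro i _
        rw [Nat.choose_succ_succ, Nat.cast_add]
        have : j + (i + 1) = j + 1 + i := by omega
        rw [this, pow_succ]
        ring
      rw [Finset.sum_congr rfl h1, Finset.sum_add_distrib]
      have h2 : ∑ i ∈ Finset.range (k + 1), (-1:ℝ) ^ (i+1) * (k.choose (i+1) : ℝ) * g (j + (i+1))
          = ∑ i ∈ Finset.range (k + 1), (-1:ℝ) ^ i * (k.choose i : ℝ) * g (j + i)
            - (k.choose 0 : ℝ) * g (j + 0) := by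
        have : ∑ i ∈ Finset.range (k + 1), (-1:ℝ) ^ (i+1) * (k.choose (i+1) : ℝ) * g (j + (i+1))
            = ∑ i ∈ Finset.range k, (-1:ℝ) ^ (i+1) * (k.choose (i+1) : ℝ) * g (j + (i+1)) := by
          rw [Finset.sum_range_succ, Nat.choose_succ_self]; simp
        rw [this, Finset.sum_range_succ' (fun i => (-1:ℝ) ^ i * (k.choose i : ℝ) * g (j + i))]
        simp
      rw [h2, Finset.sum_neg_distrib]
      simp
      ring
    have : fdiff g (k+1) j = fdiff g k (j+1) - fdiff g k j := rfl
    rw [this, ih, ih, step, pow_succ]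
    ring

lemma fdiff_zero_eq (g : ℕ → ℝ) (k : ℕ) :
    fdiff g k 0 = ∑ i ∈ Finset.range (k + 1), (-1 : ℝ) ^ (k - i) * (k.choose i : ℝ) * g i := by
  rw [fdiff_eq_sum, Finset.mul_sum]
  refine Finset.sum_congr rfl fun i hi => ?_
  have hik : i ≤ k := Finset.mem_range_succ_iff.mp hi
  have hsign : (-1 : ℝ) ^ (k - i) = (-1 : ℝ) ^ k * (-1 : ℝ) ^ i := by
    have h1 : (-1 : ℝ) ^ (k - i) * (-1 : ℝ) ^ i = (-1 : ℝ) ^ k := by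
      rw [← pow_add, Nat.sub_add_cancel hik]
    have h2 : ((-1 : ℝ) ^ i) * ((-1 : ℝ) ^ i) = 1 := by
      rw [← pow_add, ← two_mul, pow_mul]; norm_num
    calc (-1 : ℝ) ^ (k - i) = (-1 : ℝ) ^ (k - i) * (((-1:ℝ)^i) * ((-1:ℝ)^i)) := by rw [h2, mul_one]
      _ = (-1 : ℝ) ^ k * (-1 : ℝ) ^ i := by rw [← mul_assoc, h1]
  rw [hsign]
  simp only [zero_add]
  ring


section Prob

variable {Ω : Type*} [MeasurableSpace Ω] {μ : Measure Ω} [IsProbabilityMeasure μ]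
  {Y : ℕ → Ω → ℝ}


variable {Ω : Type*} [MeasurableSpace Ω] {μ : Measure Ω} [IsProbabilityMeasure μ]
  {Y : ℕ → Ω → ℝ}

lemma measurable_partialSum (hmeas : ∀ j, Measurable (Y j)) (k : ℕ) :
    Measurable (partialSum Y k) := by
  unfold partialSum
  exact Finset.measurable_sum _ fun i _ => hmeas i

lemma integrable_dff_comp {X : Ω → ℝ} (hX : Measurable X)
    (hm : ∀ m : ℕ, Integrable (fun ω => |X ω| ^ m) μ) (lam : ℝ) (m : ℕ) :
    Integrable (fun ω => degFallingFactorial lam m (X ω)) μ := by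
  have hbound : Integrable (fun ω => ∑ i ∈ Finset.range (m + 1),
      |X ω| ^ i * ((m : ℝ) * |lam|) ^ (m - i) * (m.choose i : ℝ)) μ :=
    integrable_finset_sum _ fun i _ => ((hm i).mul_const _).mul_const _
  refine hbound.mono' ((measurable_dff lam m).comp hX).aestronglyMeasurable ?_
  filter_upwards with ω
  rw [Real.norm_eq_abs]
  calc |degFallingFactorial lam m (X ω)| ≤ (|X ω| + m * |lam|) ^ m := abs_dff_le lam m (X ω)
    _ = _ := add_pow _ _ m

lemma integrable_abs_pow_Y (hident : ∀ j, IdentDistrib (Y j) (Y 0) μ μ)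
    (hmom : ∀ m : ℕ, Integrable (fun ω => |Y 0 ω| ^ m) μ) (j m : ℕ) :
    Integrable (fun ω => |Y j ω| ^ m) μ :=
  (((hident j).comp (measurable_abs.pow_const m)).integrable_iff).mpr (hmom m)

lemma indepFun_partialSum (hindep : iIndepFun Y μ)
    (hmeas : ∀ j, Measurable (Y j)) (j : ℕ) :
    IndepFun (partialSum Y j) (Y j) μ := by
  have h := hindep.indepFun_sum_range_succ hmeas j
  have he : (∑ i ∈ Finset.range j, Y i) = partialSum Y j := by
    funext ω; simp [partialSum]
  rwa [he] at h

lemma integrable_abs_pow_S (hmeas : ∀ j, Measurable (Y j))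
    (hindep : iIndepFun Y μ)
    (hident : ∀ j, IdentDistrib (Y j) (Y 0) μ μ)
    (hmom : ∀ m : ℕ, Integrable (fun ω => |Y 0 ω| ^ m) μ) :
    ∀ j m, Integrable (fun ω => |partialSum Y j ω| ^ m) μ := by
  intro j
  induction j with
  | zero =>
    intro m
    have : (fun ω : Ω => |partialSum Y 0 ω| ^ m) = fun _ => |(0 : ℝ)| ^ m := by
      funext ω; simp [partialSum]
    rw [this]
    exact integrable_const _
  | succ j ih =>
    intro m
    have hterm : ∀ i : ℕ, Integrable (fun ω => |partialSum Y j ω| ^ i * |Y j ω| ^ (m - i)) μ := by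
      intro i
      have hi : IndepFun (fun ω => |partialSum Y j ω| ^ i) (fun ω => |Y j ω| ^ (m - i)) μ :=
        (indepFun_partialSum hindep hmeas j).comp (measurable_abs.pow_const i)
          (measurable_abs.pow_const (m - i))
      exact hi.integrable_mul (ih i) (integrable_abs_pow_Y hident hmom j (m - i))
    have hbound : Integrable (fun ω => ∑ i ∈ Finset.range (m + 1),
        |partialSum Y j ω| ^ i * |Y j ω| ^ (m - i) * (m.choose i : ℝ)) μ :=
      integrable_finset_sum _ fun i _ => (hterm i).mul_const _
    refine hbound.mono' ((measurable_partialSum hmeas (j+1)).abs.pow_const m).aestronglyMeasurable ?_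
    filter_upwards with ω
    rw [Real.norm_eq_abs, abs_pow, abs_abs]
    have h1 : partialSum Y (j+1) ω = partialSum Y j ω + Y j ω := Finset.sum_range_succ _ _
    calc |partialSum Y (j+1) ω| ^ m ≤ (|partialSum Y j ω| + |Y j ω|) ^ m := by
          rw [h1]; exact pow_le_pow_left₀ (abs_nonneg _) (abs_add_le _ _) m
      _ = _ := add_pow _ _ m

lemma integrable_dff_S (hmeas : ∀ j, Measurable (Y j))
    (hindep : iIndepFun Y μ)
    (hident : ∀ j, IdentDistrib (Y j) (Y 0) μ μ)
    (hmom : ∀ m : ℕ, Integrable (fun ω => |Y 0 ω| ^ m) μ) (lam : ℝ) (j m : ℕ) :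
    Integrable (fun ω => degFallingFactorial lam m (partialSum Y j ω)) μ :=
  integrable_dff_comp (measurable_partialSum hmeas j)
    (integrable_abs_pow_S hmeas hindep hident hmom j) lam m

lemma integrable_dff_Y (hmeas : ∀ j, Measurable (Y j))
    (hident : ∀ j, IdentDistrib (Y j) (Y 0) μ μ)
    (hmom : ∀ m : ℕ, Integrable (fun ω => |Y 0 ω| ^ m) μ) (lam : ℝ) (j m : ℕ) :
    Integrable (fun ω => degFallingFactorial lam m (Y j ω)) μ :=
  integrable_dff_comp (hmeas j) (integrable_abs_pow_Y hident hmom j) lam m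

lemma expect_succ (hmeas : ∀ j, Measurable (Y j))
    (hindep : iIndepFun Y μ)
    (hident : ∀ j, IdentDistrib (Y j) (Y 0) μ μ)
    (hmom : ∀ m : ℕ, Integrable (fun ω => |Y 0 ω| ^ m) μ) (lam : ℝ) (n j : ℕ) :
    (∫ ω, degFallingFactorial lam n (partialSum Y (j+1) ω) ∂μ)
      = ∑ l ∈ Finset.range (n + 1), ((n.choose l : ℝ) *
          (∫ ω, degFallingFactorial lam (n - l) (Y 0 ω) ∂μ)) *
          (∫ ω, degFallingFactorial lam l (partialSum Y j ω) ∂μ) := by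
  have hInd : ∀ l : ℕ, IndepFun (fun ω => degFallingFactorial lam l (partialSum Y j ω))
      (fun ω => degFallingFactorial lam (n - l) (Y j ω)) μ := fun l =>
    (indepFun_partialSum hindep hmeas j).comp (measurable_dff lam l) (measurable_dff lam (n - l))
  have step1 : (∫ ω, degFallingFactorial lam n (partialSum Y (j+1) ω) ∂μ)
      = ∫ ω, ∑ l ∈ Finset.range (n + 1), (n.choose l : ℝ) *
          (degFallingFactorial lam l (partialSum Y j ω) *
            degFallingFactorial lam (n - l) (Y j ω)) ∂μ := by
    refine integral_congr_ae (Filter.Eventually.of_forall fun ω => ?_)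
    dsimp only
    rw [show partialSum Y (j+1) ω = partialSum Y j ω + Y j ω from Finset.sum_range_succ _ _,
      dff_add]
    exact Finset.sum_congr rfl fun l _ => by ring
  have hint : ∀ l ∈ Finset.range (n + 1), Integrable (fun ω =>
      (n.choose l : ℝ) * (degFallingFactorial lam l (partialSum Y j ω) *
        degFallingFactorial lam (n - l) (Y j ω))) μ := fun l _ =>
    ((hInd l).integrable_mul (integrable_dff_S hmeas hindep hident hmom lam j l)
      (integrable_dff_Y hmeas hident hmom lam j (n - l))).const_mul _
  rw [step1, integral_finset_sum _ hint]
  refine Finset.sum_congr rfl fun l _ => ?_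
  rw [integral_const_mul]
  have hmul := (hInd l).integral_mul_eq_mul_integral
    (integrable_dff_S hmeas hindep hident hmom lam j l).aestronglyMeasurable
    (integrable_dff_Y hmeas hident hmom lam j (n - l)).aestronglyMeasurable
  have hY0 : (∫ ω, degFallingFactorial lam (n - l) (Y j ω) ∂μ)
      = ∫ ω, degFallingFactorial lam (n - l) (Y 0 ω) ∂μ :=
    ((hident j).comp (measurable_dff lam (n - l))).integral_eq
  calc (n.choose l : ℝ) * ∫ ω, degFallingFactorial lam l (partialSum Y j ω) *
        degFallingFactorial lam (n - l) (Y j ω) ∂μ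
      = (n.choose l : ℝ) * ((∫ ω, degFallingFactorial lam l (partialSum Y j ω) ∂μ) *
          ∫ ω, degFallingFactorial lam (n - l) (Y j ω) ∂μ) := by rw [← hmul]; rfl
    _ = _ := by rw [hY0]; ring


lemma fdiff_expect_eq_zero (hmeas : ∀ j, Measurable (Y j))
    (hindep : iIndepFun Y μ)
    (hident : ∀ j, IdentDistrib (Y j) (Y 0) μ μ)
    (hmom : ∀ m : ℕ, Integrable (fun ω => |Y 0 ω| ^ m) μ) (lam : ℝ) :
    ∀ n k j, n < k →
      fdiff (fun i => ∫ ω, degFallingFactorial lam n (partialSum Y i ω) ∂μ) k j = 0 := by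
  intro n
  induction n using Nat.strong_induction_on with
  | _ n IH =>
    intro k j hk
    obtain ⟨k', rfl⟩ : ∃ k', k = k' + 1 := ⟨k - 1, by omega⟩
    rw [fdiff_shift]
    have hdelta : (fun i => (∫ ω, degFallingFactorial lam n (partialSum Y (i+1) ω) ∂μ)
          - ∫ ω, degFallingFactorial lam n (partialSum Y i ω) ∂μ)
        = fun i => ∑ l ∈ Finset.range n, ((n.choose l : ℝ) *
            (∫ ω, degFallingFactorial lam (n - l) (Y 0 ω) ∂μ)) *
            (∫ ω, degFallingFactorial lam l (partialSum Y i ω) ∂μ) := by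
      funext i
      rw [expect_succ hmeas hindep hident hmom lam n i, Finset.sum_range_succ]
      have hb0 : (∫ ω, degFallingFactorial lam (n - n) (Y 0 ω) ∂μ) = 1 := by
        simp [Nat.sub_self, dff_zero]
      rw [hb0, Nat.choose_self]
      ring
    rw [hdelta, fdiff_sum]
    refine Finset.sum_eq_zero fun l hl => ?_
    have hln : l < n := Finset.mem_range.mp hl
    rw [IH l hln k' j (by omega), mul_zero]

lemma hasSum_choose_halves (k : ℕ) :
    HasSum (fun i : ℕ => (i.choose k : ℝ) * (1/2 : ℝ) ^ i) 2 := by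
  have hr : ‖(1/2 : ℝ)‖ < 1 := by rw [Real.norm_eq_abs, abs_of_pos] <;> norm_num
  have h := hasSum_choose_mul_geometric_of_norm_lt_one k hr
  have h2 := h.mul_left ((1/2 : ℝ) ^ k)
  have heq : (fun m : ℕ => (1/2:ℝ)^k * (((m+k).choose k : ℝ) * (1/2:ℝ)^m))
      = fun m : ℕ => (((m+k).choose k : ℝ)) * (1/2:ℝ)^(m+k) := by
    funext m; rw [pow_add]; ring
  rw [heq] at h2
  have h3 := (hasSum_nat_add_iff (f := fun i : ℕ => (i.choose k : ℝ) * (1/2 : ℝ) ^ i) k).mp h2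
  have hzero : ∑ i ∈ Finset.range k, (i.choose k : ℝ) * (1/2 : ℝ) ^ i = 0 :=
    Finset.sum_eq_zero fun i hi => by
      rw [Nat.choose_eq_zero_of_lt (Finset.mem_range.mp hi)]; simp
  rw [hzero, add_zero] at h3
  convert h3 using 1
  · rfl
  rw [show (1 : ℝ) - 1/2 = 1/2 by norm_num]
  rw [div_pow, one_pow, div_pow, one_pow, one_div_one_div, pow_succ]
  have h2k : (2:ℝ)^k ≠ 0 := by positivity
  field_simp


end Prob

end ProofAux

open ProofAux in
theorem tsum_half_pow_expectation_eq_two_mul_probDegFubini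
    {Ω : Type*} [MeasurableSpace Ω] (μ : Measure Ω) [IsProbabilityMeasure μ]
    (Y : ℕ → Ω → ℝ) (lam : ℝ)
    (hmeas : ∀ j, Measurable (Y j))
    (hindep : iIndepFun Y μ)
    (hident : ∀ j, IdentDistrib (Y j) (Y 0) μ μ)
    (hmom : ∀ m : ℕ, Integrable (fun ω => |Y 0 ω| ^ m) μ)
    (n : ℕ) :
    HasSum
      (fun i : ℕ =>
        (∫ ω, degFallingFactorial lam n (partialSum Y i ω) ∂μ) * (1 / 2 : ℝ) ^ i)
      (2 * probDegFubini μ Y lam n 1) := by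
  set g : ℕ → ℝ := fun i => ∫ ω, degFallingFactorial lam n (partialSum Y i ω) ∂μ with hg
  have hvanish : ∀ k, n < k → ∀ j, fdiff g k j = 0 := fun k hk j =>
    fdiff_expect_eq_zero hmeas hindep hident hmom lam n k j hk
  -- Newton representation with fixed range
  have hrep : ∀ i, g i = ∑ k ∈ Finset.range (n + 1), (i.choose k : ℝ) * fdiff g k 0 := by
    intro i
    have hN := newton g i 0
    simp only [zero_add] at hN
    rw [← hN]
    have e1 : ∑ k ∈ Finset.range (i + 1), (i.choose k : ℝ) * fdiff g k 0
        = ∑ k ∈ Finset.range (i + n + 2), (i.choose k : ℝ) * fdiff g k 0 := by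
      refine Finset.sum_subset (Finset.range_subset_range.mpr (by omega)) fun k _ hk => ?_
      rw [Nat.choose_eq_zero_of_lt (by simpa using hk)]
      simp
    have e2 : ∑ k ∈ Finset.range (n + 1), (i.choose k : ℝ) * fdiff g k 0
        = ∑ k ∈ Finset.range (i + n + 2), (i.choose k : ℝ) * fdiff g k 0 := by
      refine Finset.sum_subset (Finset.range_subset_range.mpr (by omega)) fun k _ hk => ?_
      rw [hvanish k (by simpa using hk) 0, mul_zero]
    rw [e1, ← e2]
  -- summation
  have hsum : HasSum (fun i : ℕ => ∑ k ∈ Finset.range (n + 1),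
      fdiff g k 0 * ((i.choose k : ℝ) * (1/2 : ℝ) ^ i))
      (∑ k ∈ Finset.range (n + 1), fdiff g k 0 * 2) :=
    hasSum_sum fun k _ => (hasSum_choose_halves k).mul_left (fdiff g k 0)
  have hfun : (fun i : ℕ => ∑ k ∈ Finset.range (n + 1),
      fdiff g k 0 * ((i.choose k : ℝ) * (1/2 : ℝ) ^ i))
      = fun i : ℕ => g i * (1/2 : ℝ) ^ i := by
    funext i
    rw [hrep i, Finset.sum_mul]
    exact Finset.sum_congr rfl fun k _ => by ring
  rw [hfun] at hsum
  have hval : ∑ k ∈ Finset.range (n + 1), fdiff g k 0 * 2 = 2 * probDegFubini μ Y lam n 1 := by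
    unfold probDegFubini
    rw [Finset.mul_sum]
    refine Finset.sum_congr rfl fun k _ => ?_
    have hfd : fdiff g k 0 = probDegStirling2 μ Y lam n k * (k.factorial : ℝ) := by
      rw [fdiff_zero_eq]
      unfold probDegStirling2
      have hfac : (k.factorial : ℝ) ≠ 0 := Nat.cast_ne_zero.mpr k.factorial_ne_zero
      field_simp
      rfl
    rw [hfd]
    simp
    ring
  rw [hval] at hsum
  exact hsum
end
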